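/- arXiv:2001.03372 — 7 statements merged into one kernel-verified Lean document; each statement's English description precedes it below -/
import Mathlib

section
/- Fix an integer m ≥ 0 and define Q₁ᵐ(y) := Σ_{1 ≤ i ≤ m, i ≡ m (mod 2)} C(m−i, (m−i)/2) · yⁱ / i, and for 0 < x < 1/2 set F(x) := Σ_{k>0, k ≡ m (mod 2)} C(k+m, (k+m)/2) · x^k / k − Q₁ᵐ(1/x) + ε_m · C(m, m/2) · log(1 + √(1 − 4x²)), where ε_m = 1 if m is even and ε_m = 0 if m is odd. Then F is differentiable on (0, 1/2) and F′(x) = 1/(x^{m+1}·√(1 − 4x²)) − ε_m · C(m, m/2) / (x·√(1 − 4x²)) for all x ∈ (0, 1/2). -/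
/-!
Since `C(k+m, (k+m)/2) = centralBinom ((k+m)/2)`, differentiating the series termwise gives
`x^{-(m+1)}` times the tail `∑_{2n > m} centralBinom n x^{2n}` of
`∑ₙ centralBinom n x^{2n} = 1/√(1-4x²)`, the binomial series of `(1 - 4x²)^{-1/2}`.
The derivative of `-Q₁ᵐ(1/x)` is `x^{-(m+1)}` times the head `∑_{2n < m}` of the same series,
so only the term `2n = m` (present when `m` is even) is missing. It contributes
`C(m, m/2)/x`, which cancels against the derivative
`C(m, m/2)·(1/x - 1/(x√(1-4x²)))` of the logarithm.
-/

open Real Finset Nat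

open Polynomial in
theorem descPochhammer_smeval_eq_prod_range {R : Type*} [CommRing R] (n : ℕ) (r : R) :
    (descPochhammer ℤ n).smeval r = ∏ j ∈ range n, (r - j) := by
  induction n with
  | zero => simp [smeval_one]
  | succ n ih =>
    rw [descPochhammer_succ_right, smeval_mul, ih, prod_range_succ, smeval_sub, smeval_X,
      smeval_natCast]
    simp

theorem four_pow_mul_prod_range_add_half (n : ℕ) :
    (4 : ℝ) ^ n * ∏ j ∈ range n, ((j : ℝ) + 1 / 2) = n ! * centralBinom n := by
  induction n with
  | zero => simp
  | succ n ih =>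
    have hsucc : ((n : ℝ) + 1) * centralBinom (n + 1) = 2 * (2 * n + 1) * centralBinom n := by
      exact_mod_cast Nat.succ_mul_centralBinom_succ n
    rw [prod_range_succ, factorial_succ]
    push_cast
    linear_combination (4 * ((n : ℝ) + 1 / 2)) * ih - n ! * hsucc

theorem ring_choose_half_add_sub_one (n : ℕ) :
    Ring.choose ((1 / 2 : ℝ) + n - 1) n = centralBinom n / 4 ^ n := by
  rw [Ring.choose_eq_smul, descPochhammer_smeval_eq_prod_range, smul_eq_mul,
    ← prod_range_reflect]
  have hreflect : ∏ j ∈ range n, ((1 / 2 : ℝ) + n - 1 - ((n - 1 - j : ℕ) : ℝ)) =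
      ∏ j ∈ range n, ((j : ℝ) + 1 / 2) := by
    refine prod_congr rfl fun j hj => ?_
    rw [mem_range] at hj
    rw [Nat.cast_sub (by omega), Nat.cast_sub (by omega)]
    push_cast
    ring
  rw [hreflect, inv_mul_eq_div, div_eq_div_iff (by positivity) (by positivity)]
  linear_combination four_pow_mul_prod_range_add_half n

theorem hasSum_centralBinom_mul_pow {t : ℝ} (ht : |t| < 1 / 4) :
    HasSum (fun n => (centralBinom n : ℝ) * t ^ n) (1 / √(1 - 4 * t)) := by
  have hmem : 4 * t ∈ Metric.eball (0 : ℝ) 1 := by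
    rw [← ENNReal.ofReal_one, Metric.eball_ofReal, mem_ball_zero_iff, norm_mul]
    norm_num
    linarith
  have h := (one_div_one_sub_rpow_hasFPowerSeriesOnBall_zero (1 / 2)).hasSum hmem
  simp only [FormalMultilinearSeries.ofScalars_apply_eq, ring_choose_half_add_sub_one, smul_eq_mul,
    zero_add, ← sqrt_eq_rpow] at h
  refine h.congr_fun fun n => ?_
  rw [mul_pow, ← mul_assoc, div_mul_cancel₀ _ (by positivity)]

/-- Junk values at `k = 0`: `c 0 * y ^ 0 / 0 = 0`, whereas `c 0 * x ^ (0 - 1) = c 0`. -/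
theorem hasDerivAt_tsum_mul_pow_div {c : ℕ → ℝ} {r x : ℝ} (hc : c 0 = 0)
    (hsum : Summable fun k => |c k| * r ^ (k - 1)) (hx : |x| < r) :
    HasDerivAt (fun y => ∑' k, c k * y ^ k / k) (∑' k, c k * x ^ (k - 1)) x := by
  have hderiv (k : ℕ) (y : ℝ) :
      HasDerivAt (fun y => c k * y ^ k / k) (c k * y ^ (k - 1)) y := by
    rcases eq_or_ne k 0 with rfl | hk
    · simpa [hc] using hasDerivAt_const y (0 : ℝ)
    · refine (((hasDerivAt_pow k y).const_mul (c k)).div_const (k : ℝ)).congr_deriv ?_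
      field_simp
  have hbound (k : ℕ) (y : ℝ) (hy : y ∈ Set.Ioo (-r) r) :
      ‖c k * y ^ (k - 1)‖ ≤ |c k| * r ^ (k - 1) := by
    rw [norm_mul, norm_pow, Real.norm_eq_abs, Real.norm_eq_abs]
    gcongr
    exact (abs_lt.2 hy).le
  have hzero : (fun k => c k * (0 : ℝ) ^ k / k) = 0 := by
    funext k
    rcases eq_or_ne k 0 with rfl | hk <;> simp [*]
  have hr : 0 < r := (abs_nonneg x).trans_lt hx
  exact hasDerivAt_tsum_of_isPreconnected hsum isOpen_Ioo (convex_Ioo (-r) r).isPreconnected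
    (fun k y _ => hderiv k y) hbound (y₀ := 0) ⟨by linarith, hr⟩ (hzero ▸ summable_zero)
    (abs_lt.1 hx)

/-- `n ↦ 2 * n + 2 - m % 2` enumerates the `k > 0` with `k ≡ m [MOD 2]`,
and `(k + m) / 2 = n + (m / 2 + 1)` along it. -/
theorem hasSum_ite_parity_iff {M : Type*} [AddCommMonoid M] [TopologicalSpace M] (m : ℕ)
    (g : ℕ → M) {a : M} :
    HasSum (fun k => if k % 2 = m % 2 ∧ 0 < k then g ((k + m) / 2) else 0) a ↔
      HasSum (fun n => g (n + (m / 2 + 1))) a := by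
  have hinj : Function.Injective fun n => 2 * n + 2 - m % 2 := fun a b h => by
    simp only at h
    omega
  rw [← hinj.hasSum_iff]
  · refine iff_of_eq (congrArg (HasSum · a) (funext fun n => ?_))
    rw [Function.comp_apply, if_pos (by omega)]
    congr 1
    omega
  · intro k hk
    refine if_neg fun ⟨hpar, hpos⟩ => hk ⟨(k + m % 2 - 2) / 2, ?_⟩
    simp only
    omega

/-- `k` times the coefficient of `x ^ k` in the series part of `F`. -/
def tailCoeff (m k : ℕ) : ℝ :=
  if k % 2 = m % 2 ∧ 0 < k then ((k + m).choose ((k + m) / 2) : ℝ) else 0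

theorem tailCoeff_nonneg (m k : ℕ) : 0 ≤ tailCoeff m k := by
  unfold tailCoeff
  split_ifs <;> positivity

theorem tailCoeff_mul_pow_div (m k : ℕ) (y : ℝ) :
    tailCoeff m k * y ^ k / k =
      if k % 2 = m % 2 ∧ 0 < k then ((k + m).choose ((k + m) / 2) : ℝ) * y ^ k / k else 0 := by
  unfold tailCoeff
  split_ifs <;> simp

theorem hasSum_tailCoeff_mul_pow (m : ℕ) {x : ℝ} (hx0 : x ≠ 0) (hx : |x| < 1 / 2) :
    HasSum (fun k => tailCoeff m k * x ^ (k - 1))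
      ((1 / √(1 - 4 * x ^ 2) -
          ∑ n ∈ range (m / 2 + 1), (centralBinom n : ℝ) * x ^ (2 * n)) / x ^ (m + 1)) := by
  have hx2 : |x ^ 2| < 1 / 4 := by
    rw [abs_pow]
    nlinarith [abs_nonneg x]
  have h := ((hasSum_nat_add_iff' (m / 2 + 1)).2 (hasSum_centralBinom_mul_pow hx2)).div_const
    (x ^ (m + 1))
  simp only [← pow_mul] at h
  rw [← hasSum_ite_parity_iff m fun n => (centralBinom n : ℝ) * x ^ (2 * n) / x ^ (m + 1)] at h
  refine h.congr_fun fun k => ?_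
  unfold tailCoeff
  split_ifs with hk
  · have hkm : 2 * ((k + m) / 2) = k + m := by omega
    rw [centralBinom, hkm, eq_div_iff (pow_ne_zero _ hx0), mul_assoc, ← pow_add,
      show k - 1 + (m + 1) = k + m by omega]
  · simp

theorem hasDerivAt_tsum_tailCoeff_mul_pow_div (m : ℕ) {x : ℝ} (hx0 : x ≠ 0)
    (hx : |x| < 1 / 2) :
    HasDerivAt (fun y => ∑' k, tailCoeff m k * y ^ k / k)
      ((1 / √(1 - 4 * x ^ 2) -
          ∑ n ∈ range (m / 2 + 1), (centralBinom n : ℝ) * x ^ (2 * n)) / x ^ (m + 1)) x := by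
  obtain ⟨r, hxr, hr⟩ := exists_between hx
  have hr0 : 0 < r := (abs_nonneg x).trans_lt hxr
  have hsum : Summable fun k => |tailCoeff m k| * r ^ (k - 1) := by
    simp only [abs_of_nonneg (tailCoeff_nonneg m _)]
    exact (hasSum_tailCoeff_mul_pow m hr0.ne' (by rwa [abs_of_pos hr0])).summable
  rw [← (hasSum_tailCoeff_mul_pow m hx0 hx).tsum_eq]
  exact hasDerivAt_tsum_mul_pow_div (by simp [tailCoeff]) hsum hxr

theorem sum_range_ite_parity {M : Type*} [AddCommMonoid M] (m : ℕ) (g : ℕ → M) :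
    ∑ i ∈ range (m + 1), (if i % 2 = m % 2 then g (m - i) else 0) =
      ∑ n ∈ range (m / 2 + 1), g (2 * n) := by
  rw [← sum_filter]
  refine sum_nbij' (fun i => (m - i) / 2) (fun n => m - 2 * n) ?_ ?_ ?_ ?_ ?_ <;>
    simp only [mem_filter, mem_range] <;> intro i hi
  · omega
  · omega
  · omega
  · omega
  · rw [show 2 * ((m - i) / 2) = m - i by omega]

theorem sum_Icc_ite_parity_add (m : ℕ) (x : ℝ) :
    ∑ i ∈ Icc 1 m,
        (if i % 2 = m % 2 then ((m - i).choose ((m - i) / 2) : ℝ) * x ^ (m - i) else 0) +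
      (if Even m then (m.choose (m / 2) : ℝ) else 0) * x ^ m =
      ∑ n ∈ range (m / 2 + 1), (centralBinom n : ℝ) * x ^ (2 * n) := by
  have hzero : (if Even m then (m.choose (m / 2) : ℝ) else 0) * x ^ m =
      if 0 % 2 = m % 2 then ((m - 0).choose ((m - 0) / 2) : ℝ) * x ^ (m - 0) else 0 := by
    have hpar : 0 % 2 = m % 2 ↔ Even m := by
      rw [Nat.even_iff]
      omega
    simp only [Nat.sub_zero, hpar, ite_mul, zero_mul]
  have hrange : insert 0 (Icc 1 m) = range (m + 1) := by
    ext i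
    simp only [mem_insert, mem_Icc, mem_range]
    omega
  rw [hzero, add_comm, ← sum_insert (f := fun i => if i % 2 = m % 2 then
      ((m - i).choose ((m - i) / 2) : ℝ) * x ^ (m - i) else 0) (by simp),
    hrange, sum_range_ite_parity m fun j => (j.choose (j / 2) : ℝ) * x ^ j]
  refine sum_congr rfl fun n _ => ?_
  rw [Nat.mul_div_cancel_left n two_pos, centralBinom]

theorem hasDerivAt_sum_Icc_inv_pow (m : ℕ) {x : ℝ} (hx : x ≠ 0) :
    HasDerivAt (fun y => ∑ i ∈ Icc 1 m,
        if i % 2 = m % 2 then ((m - i).choose ((m - i) / 2) : ℝ) * (1 / y) ^ i / i else 0)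
      (-(∑ i ∈ Icc 1 m,
        if i % 2 = m % 2 then ((m - i).choose ((m - i) / 2) : ℝ) * x ^ (m - i) else 0) /
          x ^ (m + 1)) x := by
  rw [neg_div, sum_div, ← sum_neg_distrib]
  refine HasDerivAt.fun_sum fun i hi => ?_
  rw [mem_Icc] at hi
  split_ifs
  · have hi0 : (i : ℝ) ≠ 0 := by exact_mod_cast (show i ≠ 0 by omega)
    simp only [one_div]
    refine ((((hasDerivAt_inv hx).fun_pow i).const_mul _).div_const _).congr_deriv ?_
    rw [show m + 1 = (m - i) + (i - 1) + 2 by omega, pow_add, pow_add, inv_pow]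
    field_simp
  · simpa using hasDerivAt_const x (0 : ℝ)

theorem hasDerivAt_log_one_add_sqrt_one_sub {x : ℝ} (hx0 : x ≠ 0) (hx : |x| < 1 / 2) :
    HasDerivAt (fun y => log (1 + √(1 - 4 * y ^ 2)))
      (1 / x - 1 / (x * √(1 - 4 * x ^ 2))) x := by
  have hpos : 0 < 1 - 4 * x ^ 2 := by nlinarith [abs_nonneg x, sq_abs x]
  have hs2 := Real.sq_sqrt hpos.le
  have h := ((((hasDerivAt_pow 2 x).const_mul 4).const_sub 1).sqrt hpos.ne').const_add 1 |>.log
    (by positivity)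
  refine h.congr_deriv ?_
  field_simp
  norm_num
  linear_combination -2 * hs2

/-- Fix `m ≥ 0`, let
`Q₁ᵐ(y) = Σ_{1 ≤ i ≤ m, i ≡ m (2)} C(m−i,(m−i)/2)·yⁱ/i` and, for `0 < x < 1/2`,
`F(x) = Σ_{k>0, k ≡ m (2)} C(k+m,(k+m)/2)·x^k/k − Q₁ᵐ(1/x)
          + ε_m·C(m,m/2)·log(1+√(1−4x²))`.
Then `F` is differentiable on `(0,1/2)` with
`F′(x) = 1/(x^{m+1}√(1−4x²)) − ε_m·C(m,m/2)/(x√(1−4x²))`. -/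
theorem derivative_of_combinatorial_series (m : ℕ) :
    ∀ x ∈ Set.Ioo (0 : ℝ) (1 / 2),
      HasDerivAt
        (fun y : ℝ =>
          (∑' k : ℕ,
              if k % 2 = m % 2 ∧ 0 < k then
                (((k + m).choose ((k + m) / 2) : ℕ) : ℝ) * y ^ k / k else 0)
          - (∑ i ∈ Finset.Icc 1 m,
              if i % 2 = m % 2 then
                (((m - i).choose ((m - i) / 2) : ℕ) : ℝ) * (1 / y) ^ i / i else 0)
          + (if Even m then ((m.choose (m / 2) : ℕ) : ℝ) else 0) *
              Real.log (1 + Real.sqrt (1 - 4 * y ^ 2)))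
        (1 / (x ^ (m + 1) * Real.sqrt (1 - 4 * x ^ 2))
          - (if Even m then ((m.choose (m / 2) : ℕ) : ℝ) else 0) /
              (x * Real.sqrt (1 - 4 * x ^ 2)))
        x := by
  rintro x ⟨hx0, hx1⟩
  have hx : |x| < 1 / 2 := abs_lt.2 ⟨by linarith, hx1⟩
  have hseries := hasDerivAt_tsum_tailCoeff_mul_pow_div m hx0.ne' hx
  simp only [tailCoeff_mul_pow_div] at hseries
  have hlog := (hasDerivAt_log_one_add_sqrt_one_sub hx0.ne' hx).const_mul
    (if Even m then ((m.choose (m / 2) : ℕ) : ℝ) else 0)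
  refine ((hseries.sub (hasDerivAt_sum_Icc_inv_pow m hx0.ne')).add hlog).congr_deriv ?_
  rw [← sum_Icc_ite_parity_add m x]
  field_simp
  ring
end

section
/- Fix an integer m ≥ 0 and define the polynomial Q₂ᵐ(y) := − Σ_{1 ≤ i ≤ m, i ≡ m (mod 2)} [2^{m−i} · i!! · (m−1)!! / (i · (i−1)!! · m!!)] · yⁱ. Then the polynomial identity y·(4 − y²)·(d/dy)Q₂ᵐ(y) − 4·Q₂ᵐ(y) = y^{m+2} − ε_m · C(m, m/2) · y² holds in ℝ[y], where ε_m = 1 if m is even and ε_m = 0 if m is odd. -/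
open Nat Polynomial

noncomputable def Qm (m : ℕ) : Polynomial ℝ :=
  -∑ i ∈ Finset.Icc 1 m,
      if i % 2 = m % 2 then
        Polynomial.C
          (((2 ^ (m - i) * (i‼) * ((m - 1)‼) : ℕ) : ℝ) /
            ((i * ((i - 1)‼) * (m‼) : ℕ) : ℝ)) * Polynomial.X ^ i
      else 0

lemma Qm_step (k : ℕ) :
    Qm (k + 2) = Polynomial.C (4 * ((k:ℝ) + 1) / ((k:ℝ) + 2)) * Qm k
      - Polynomial.C (1 / ((k:ℝ) + 2)) * Polynomial.X ^ (k + 2) := by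
  unfold Qm
  rw [Finset.sum_Icc_succ_top (by omega), Finset.sum_Icc_succ_top (by omega)]
  rw [if_pos rfl, if_neg (by omega)]
  have htop : (((2 ^ (k + 2 - (k+2)) * ((k+2)‼) * ((k + 2 - 1)‼) : ℕ) : ℝ) /
      (((k+2) * ((k + 2 - 1)‼) * ((k+2)‼) : ℕ) : ℝ)) = 1 / ((k:ℝ) + 2) := by
    have h1 : ((k+2)‼ : ℝ) ≠ 0 := by exact_mod_cast (Nat.doubleFactorial_pos _).ne'
    have h2 : (((k + 2 - 1)‼ : ℕ) : ℝ) ≠ 0 := by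
      exact_mod_cast (Nat.doubleFactorial_pos _).ne'
    rw [Nat.sub_self]
    push_cast
    field_simp
  rw [htop]
  have hsum : ∀ i ∈ Finset.Icc 1 k,
      (if i % 2 = (k + 2) % 2 then
          Polynomial.C
            (((2 ^ (k + 2 - i) * (i‼) * ((k + 2 - 1)‼) : ℕ) : ℝ) /
              ((i * ((i - 1)‼) * ((k+2)‼) : ℕ) : ℝ)) * Polynomial.X ^ i
        else 0) =
      Polynomial.C (4 * ((k:ℝ) + 1) / ((k:ℝ) + 2)) *
        (if i % 2 = k % 2 then
          Polynomial.C
            (((2 ^ (k - i) * (i‼) * ((k - 1)‼) : ℕ) : ℝ) /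
              ((i * ((i - 1)‼) * (k‼) : ℕ) : ℝ)) * Polynomial.X ^ i
        else 0) := by
    intro i hi
    simp only [Finset.mem_Icc] at hi
    have hpar : i % 2 = (k + 2) % 2 ↔ i % 2 = k % 2 := by omega
    by_cases hp : i % 2 = k % 2
    · rw [if_pos (hpar.mpr hp), if_pos hp]
      rw [← mul_assoc, ← Polynomial.C_mul]
      congr 2
      have e1 : k + 2 - i = (k - i) + 2 := by omega
      have e2 : (k + 2 - 1)‼ = (k + 1) * ((k-1)‼) := by
        have := Nat.doubleFactorial_add_one k
        simpa using this
      have e3 : (k + 2)‼ = (k + 2) * (k‼) := Nat.doubleFactorial_add_two k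
      rw [e1, e2, e3]
      have hi0 : ((i:ℝ)) ≠ 0 := by exact_mod_cast (by omega : i ≠ 0)
      have hd1 : (((i-1)‼ : ℕ) : ℝ) ≠ 0 := by
        exact_mod_cast (Nat.doubleFactorial_pos _).ne'
      have hd2 : ((k‼ : ℕ) : ℝ) ≠ 0 := by
        exact_mod_cast (Nat.doubleFactorial_pos _).ne'
      have hk2 : ((k:ℝ) + 2) ≠ 0 := by positivity
      push_cast
      rw [pow_add]
      field_simp
      ring
    · rw [if_neg (fun h => hp (hpar.mp h)), if_neg hp]
      simp
  rw [Finset.sum_congr rfl hsum, ← Finset.mul_sum]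
  ring

lemma choose_step (n : ℕ) :
    (2*n + 2) * (2*n + 2).choose (n+1) = 4 * (2*n+1) * ((2*n).choose n) := by
  have h := Nat.succ_mul_centralBinom_succ n
  simp only [Nat.centralBinom] at h
  have h2 : 2 * (n+1) = 2*n + 2 := by ring
  rw [h2] at h
  calc (2*n + 2) * (2*n + 2).choose (n+1) = 2 * ((n+1) * (2*n + 2).choose (n+1)) := by ring
  _ = 2 * (2 * (2*n+1) * ((2*n).choose n)) := by rw [h]
  _ = 4 * (2*n+1) * ((2*n).choose n) := by ring

lemma key (m : ℕ) :
    Polynomial.X * (4 - Polynomial.X ^ 2) * Polynomial.derivative (Qm m) - 4 * Qm m =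
      Polynomial.X ^ (m + 2)
        - Polynomial.C (if Even m then ((m.choose (m / 2) : ℕ) : ℝ) else 0) *
            Polynomial.X ^ 2 := by
  induction m using Nat.twoStepInduction with
  | zero =>
    simp [Qm]
  | one =>
    have : Qm 1 = -Polynomial.X := by
      unfold Qm
      rw [Finset.Icc_self, Finset.sum_singleton]
      norm_num [Nat.doubleFactorial]
    rw [this]
    rw [if_neg (by simp)]
    simp
    ring
  | more k ih _ =>
    rw [Qm_step]
    have hk2 : ((k:ℝ) + 2) ≠ 0 := by positivity
    have h1 : Polynomial.C (1 / ((k:ℝ) + 2)) * Polynomial.C (((k:ℕ) + 2 : ℕ) : ℝ)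
        = (1 : Polynomial ℝ) := by
      rw [← Polynomial.C_mul, ← Polynomial.C_1]
      congr 1
      push_cast
      field_simp
    have h2 : Polynomial.C (4 * ((k:ℝ) + 1) / ((k:ℝ) + 2))
        = 4 - 4 * Polynomial.C (1 / ((k:ℝ) + 2)) := by
      rw [show (4 : Polynomial ℝ) = Polynomial.C 4 by rw [map_ofNat], ← Polynomial.C_mul,
        ← Polynomial.C_sub]
      congr 1
      field_simp
      ring
    have h3 : Polynomial.C (4 * ((k:ℝ) + 1) / ((k:ℝ) + 2)) *
        Polynomial.C (if Even k then ((k.choose (k / 2) : ℕ) : ℝ) else 0) =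
        Polynomial.C (if Even (k+2) then (((k+2).choose ((k+2) / 2) : ℕ) : ℝ) else 0) := by
      rw [← Polynomial.C_mul]
      congr 1
      by_cases hev : Even k
      · rw [if_pos hev, if_pos (hev.add even_two)]
        obtain ⟨n, hn⟩ := hev
        have hk : k = 2 * n := by omega
        subst hk
        have hc := choose_step n
        have hd2 : (2*n + 2)/2 = n + 1 := by omega
        have hd1 : (2*n)/2 = n := by omega
        rw [hd1, hd2]
        have : ((2*n + 2 : ℕ) : ℝ) * (((2*n + 2).choose (n+1) : ℕ) : ℝ)
            = 4 * ((2*n+1 : ℕ):ℝ) * (((2*n).choose n : ℕ) : ℝ) := by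
          exact_mod_cast congrArg (Nat.cast : ℕ → ℝ) hc
        push_cast at this ⊢
        field_simp
        nlinarith [this]
      · rw [if_neg hev, if_neg (by simpa [Nat.even_add] using hev)]
        ring
    have hD : Polynomial.derivative ((Polynomial.X : Polynomial ℝ) ^ (k+2))
        = Polynomial.C (((k:ℕ) + 2 : ℕ) : ℝ) * Polynomial.X ^ (k+1) := by
      rw [Polynomial.derivative_X_pow]
      norm_num
    rw [show (k + 2) + 2 = k + 4 by ring] at *
    rw [Polynomial.derivative_sub, Polynomial.derivative_C_mul, Polynomial.derivative_C_mul, hD]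
    linear_combination (Polynomial.C (4 * ((k:ℝ) + 1) / ((k:ℝ) + 2))) * ih
      + ((Polynomial.X : Polynomial ℝ)^(k+4) - 4 * Polynomial.X^(k+2)) * h1
      + (Polynomial.X : Polynomial ℝ)^(k+2) * h2
      - (Polynomial.X : Polynomial ℝ)^2 * h3

open Nat Polynomial in
/-- For `m ≥ 0` let
`Q₂ᵐ(y) = − Σ_{1 ≤ i ≤ m, i ≡ m (2)} [2^{m−i}·i‼·(m−1)‼ / (i·(i−1)‼·m‼)]·yⁱ`.
Then in `ℝ[y]`:
`y·(4 − y²)·(Q₂ᵐ)′(y) − 4·Q₂ᵐ(y) = y^{m+2} − ε_m·C(m, m/2)·y²`,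
where `ε_m = 1` for even `m` and `ε_m = 0` for odd `m`. -/
theorem doubleFactorial_polynomial_identity (m : ℕ) (Q₂ : Polynomial ℝ)
    (hQ₂ : Q₂ = -∑ i ∈ Finset.Icc 1 m,
        if i % 2 = m % 2 then
          Polynomial.C
            (((2 ^ (m - i) * (i‼) * ((m - 1)‼) : ℕ) : ℝ) /
              ((i * ((i - 1)‼) * (m‼) : ℕ) : ℝ)) * Polynomial.X ^ i
        else 0) :
    Polynomial.X * (4 - Polynomial.X ^ 2) * Polynomial.derivative Q₂ - 4 * Q₂ =
      Polynomial.X ^ (m + 2)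
        - Polynomial.C (if Even m then ((m.choose (m / 2) : ℕ) : ℝ) else 0) *
            Polynomial.X ^ 2 := by
  have : Q₂ = Qm m := hQ₂
  rw [this]
  exact key m
end

section
/- Let b ∈ ℝ⟦s,λ⟧ be defined as follows: with Tutte's series τ, set r := s·(1+λs)^{−1} + τ(λ), let g ∈ ℝ⟦s,λ⟧ be the unique formal power series with constant coefficient 1 satisfying g² = (1+r)² − 4s, and set b := s + (1+λs)·g. Then b is of degree ≤ 0, i.e. every monomial sⁱλʲ occurring in b with nonzero coefficient satisfies i ≤ j. -/
/- We realize `ℝ⟦s,λ⟧` as the iterated power series ring `(ℝ⟦s⟧)⟦λ⟧`: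
the inner variable is `s` and the outer variable is `λ`. -/

/-- The variable `s` in `(ℝ⟦s⟧)⟦λ⟧`. -/
noncomputable def sVar : PowerSeries (PowerSeries ℝ) :=
  PowerSeries.C (R := PowerSeries ℝ) PowerSeries.X

/-- The variable `λ` in `(ℝ⟦s⟧)⟦λ⟧`. -/
noncomputable def lVar : PowerSeries (PowerSeries ℝ) :=
  PowerSeries.X

/-- Tutte's series `τ(λ) = Σ_{i≥1} [2·(4i+1)! / ((i+1)!·(3i+2)!)]·λⁱ`,
viewed in `(ℝ⟦s⟧)⟦λ⟧`. -/
noncomputable def tutteSeries : PowerSeries (PowerSeries ℝ) :=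
  PowerSeries.mk fun i =>
    if i = 0 then 0
    else PowerSeries.C (R := ℝ)
      (2 * (Nat.factorial (4 * i + 1) : ℝ) /
        ((Nat.factorial (i + 1) : ℝ) * (Nat.factorial (3 * i + 2) : ℝ)))

/-!
Parametrize `λ = θ(1-θ)³` by a series `θ ∈ ℝ⟦λ⟧` with `θ(0) = 0`. Tutte's series is then rational
in `θ`: `1 + τ = (1-2θ)/(1-θ)³`. Both sides satisfy the same hypergeometric differential equation
in the Euler operator `λ d/dλ` (for the right side this is a polynomial identity in `θ`, because
`λ dθ/dλ = θ(1-θ)/(1-4θ)`), and the equation determines the coefficients from the constant one.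

Clearing denominators with this parametrization gives `(1-θ)⁴(1+λs)g = (1-(1-θ)⁴s)·S`, where `S`
is the square root with `S(0) = 1` of `(1-2θ)²(1-θ)² - 4λ·(λs)`. Hence
`b = (1-θ)⁻⁴S - (λs)·(S-1)/λ`. The radicand involves `s` only through `λs`, so `S` and `(S-1)/λ`
are series in `λ` and `λs`, and so is `b`.
-/

open scoped Polynomial

namespace PowerSeries

variable {R : Type*} [CommRing R]

theorem coeff_ofNat_mul (n m : ℕ) [m.AtLeastTwo] (f : R⟦X⟧) :
    coeff n ((no_index (OfNat.ofNat m) : R⟦X⟧) * f) = OfNat.ofNat m * coeff n f := by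
  rw [← map_ofNat C m, coeff_C_mul]

theorem constantCoeff_map {S : Type*} [CommRing S] (f : R →+* S) (φ : R⟦X⟧) :
    constantCoeff (map f φ) = f (constantCoeff φ) := by
  rw [← coeff_zero_eq_constantCoeff_apply, coeff_map, coeff_zero_eq_constantCoeff_apply]

theorem coeff_mul_eq_zero_of_add_lt {f g : R⟦X⟧} {a c i : ℕ}
    (hf : ∀ k, a < k → coeff k f = 0) (hg : ∀ k, c < k → coeff k g = 0) (h : a + c < i) :
    coeff i (f * g) = 0 := by
  rw [coeff_mul]
  refine Finset.sum_eq_zero fun ⟨p, q⟩ hpq => ?_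
  rw [Finset.HasAntidiagonal.mem_antidiagonal] at hpq
  rcases lt_or_ge a p with hp | hp
  · rw [hf p hp, zero_mul]
  · rw [hg q (by omega), mul_zero]

/-- The second conclusion lets properties defined coefficientwise pass from the iterates of `Φ`
to the fixed point. -/
theorem exists_fixedPoint_of_dvd_sub {Φ : R⟦X⟧ → R⟦X⟧}
    (hΦ : ∀ n f g, X ^ n ∣ f - g → X ^ (n + 1) ∣ Φ f - Φ g) :
    ∃ f, Φ f = f ∧ ∀ n, coeff n f = coeff n (Φ^[n + 1] 0) := by
  have step (k : ℕ) : X ^ k ∣ Φ^[k + 1] 0 - Φ^[k] 0 := by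
    induction k with
    | zero => simp
    | succ k ih => simpa only [Function.iterate_succ_apply'] using hΦ _ _ _ ih
  have stable (k m : ℕ) (hkm : k ≤ m) : X ^ k ∣ Φ^[m] 0 - Φ^[k] 0 := by
    induction m, hkm using Nat.le_induction with
    | base => simp
    | succ m hkm ih =>
      rw [← sub_add_sub_cancel _ (Φ^[m] 0)]
      exact dvd_add ((pow_dvd_pow X hkm).trans (step m)) ih
  set f := mk fun n => coeff n (Φ^[n + 1] 0)
  have approx (k : ℕ) : X ^ k ∣ f - Φ^[k] 0 := by
    refine X_pow_dvd_iff.mpr fun m hm => ?_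
    have := X_pow_dvd_iff.mp (stable (m + 1) k hm) m (lt_add_one m)
    rw [map_sub, sub_eq_zero] at this ⊢
    rw [coeff_mk, this]
  refine ⟨f, ext fun n => ?_, fun n => coeff_mk _ _⟩
  have := X_pow_dvd_iff.mp (hΦ _ _ _ (approx n)) n (lt_add_one n)
  rw [map_sub, sub_eq_zero, ← Function.iterate_succ_apply' Φ] at this
  rw [this, coeff_mk]

theorem exists_mul_one_sub_pow_three_eq_X :
    ∃ θ : R⟦X⟧, constantCoeff θ = 0 ∧ θ * (1 - θ) ^ 3 = X := by
  -- `θ = Xφ`, where `φ(1 - Xφ)³ = 1` is rewritten as a fixed-point equation.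
  obtain ⟨φ, hφ, -⟩ := exists_fixedPoint_of_dvd_sub
    (Φ := fun φ : R⟦X⟧ => 1 + X * (3 * φ ^ 2 - 3 * X * φ ^ 3 + X ^ 2 * φ ^ 4)) fun n φ ψ h => by
      have hpow (k : ℕ) : X ^ n ∣ φ ^ k - ψ ^ k := h.trans (sub_dvd_pow_sub_pow φ ψ k)
      rw [pow_succ']
      convert mul_dvd_mul_left X (dvd_add (dvd_sub ((hpow 2).mul_left 3)
        ((hpow 3).mul_left (3 * X))) ((hpow 4).mul_left (X ^ 2))) using 1
      ring
  refine ⟨X * φ, by simp, ?_⟩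
  linear_combination -X * hφ

variable (R) in
noncomputable def eulerOp : Derivation R R⟦X⟧ R⟦X⟧ := (X : R⟦X⟧) • derivative R

theorem eulerOp_apply (f : R⟦X⟧) : eulerOp R f = X * derivative R f := by
  rw [eulerOp, Derivation.smul_apply, smul_eq_mul]

theorem eulerOp_X : eulerOp R (X : R⟦X⟧) = X := by simp [eulerOp_apply]

theorem coeff_eulerOp (n : ℕ) (f : R⟦X⟧) : coeff n (eulerOp R f) = n * coeff n f := by
  rw [eulerOp_apply]
  cases n with
  | zero => simp
  | succ n => rw [coeff_succ_X_mul, coeff_derivative, mul_comm]; push_cast; rfl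

theorem coeff_iterate_eulerOp (k n : ℕ) (f : R⟦X⟧) :
    coeff n ((eulerOp R)^[k] f) = n ^ k * coeff n f := by
  induction k with
  | zero => simp
  | succ k ih => rw [Function.iterate_succ_apply', coeff_eulerOp, ih, pow_succ]; ring

end PowerSeries

theorem Derivation.map_pow_mul_self {R A : Type*} [CommSemiring R] [CommSemiring A] [Algebra R A]
    (D : Derivation R A A) (a : A) (n : ℕ) : D (a ^ n) * a = n * a ^ n * D a := by
  cases n with
  | zero => simp
  | succ n => simp only [leibniz_pow, smul_eq_mul, nsmul_eq_mul, Nat.add_sub_cancel]; ring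

section NonposDeg

open PowerSeries

variable (R : Type*) [CommRing R]

/-- The series in `R⟦s⟧⟦λ⟧` (inner variable `s`) all of whose monomials `sⁱλʲ` have `i ≤ j`,
that is, the power series in `λ` and `λs`. -/
def nonposDegSubring : Subring (PowerSeries (PowerSeries R)) where
  carrier := {F | ∀ i j, j < i → coeff i (coeff j F) = 0}
  zero_mem' _ _ _ := by simp
  one_mem' i j hij := by
    rw [coeff_one]
    split_ifs
    · rw [coeff_one, if_neg (by omega)]
    · rw [map_zero]
  add_mem' hF hG i j hij := by simp [hF i j hij, hG i j hij]
  neg_mem' hF i j hij := by simp [hF i j hij]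
  mul_mem' {F G} hF hG i j hij := by
    rw [coeff_mul, map_sum]
    refine Finset.sum_eq_zero fun ⟨a, c⟩ hac => ?_
    rw [Finset.HasAntidiagonal.mem_antidiagonal] at hac
    exact coeff_mul_eq_zero_of_add_lt (hF · a) (hG · c) (hac ▸ hij)

variable {R}

theorem mem_nonposDegSubring_iff {F : PowerSeries (PowerSeries R)} :
    F ∈ nonposDegSubring R ↔ ∀ i j, coeff i (coeff j F) ≠ 0 → i ≤ j :=
  forall₂_congr fun _ _ => by rw [← not_lt, not_imp_not]

theorem map_C_mem_nonposDegSubring (f : PowerSeries R) :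
    PowerSeries.map C f ∈ nonposDegSubring R := fun i j _ => by
  rw [coeff_map, coeff_C, if_neg (by omega)]

theorem X_mem_nonposDegSubring : (X : PowerSeries (PowerSeries R)) ∈ nonposDegSubring R := by
  simpa using map_C_mem_nonposDegSubring (X : PowerSeries R)

theorem C_X_mul_X_mem_nonposDegSubring :
    C (X : PowerSeries R) * X ∈ nonposDegSubring R := fun i j hij => by
  cases j with
  | zero => rw [coeff_zero_mul_X, map_zero]
  | succ j =>
    rw [coeff_succ_mul_X, coeff_C]
    split_ifs
    · rw [coeff_X, if_neg (by omega)]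
    · rw [map_zero]

theorem exists_sq_eq_one_add_X_mul [Invertible (2 : R)] {W : PowerSeries (PowerSeries R)}
    (hW : W ∈ nonposDegSubring R) :
    ∃ Y ∈ nonposDegSubring R, (1 + X * Y) ^ 2 = 1 + X * W := by
  set h : PowerSeries (PowerSeries R) := C (C ⅟2)
  have h2 : 2 * h = 1 := by
    rw [← map_ofNat (C.comp C) 2]
    simp [h, ← map_mul]
  have hh : h ∈ nonposDegSubring R := by simpa [h] using map_C_mem_nonposDegSubring (C (⅟2 : R))
  let Φ Y := h * (W - X * Y ^ 2)
  obtain ⟨Y, hY, hcoeff⟩ := exists_fixedPoint_of_dvd_sub (Φ := Φ) fun n Y Z hYZ => by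
    rw [show Φ Y - Φ Z = X * (-h * (Y ^ 2 - Z ^ 2)) by ring, pow_succ']
    exact mul_dvd_mul_left X (hYZ.trans (dvd_mul_of_dvd_right (sub_dvd_pow_sub_pow Y Z 2) _))
  have hΦ (k : ℕ) : Φ^[k] 0 ∈ nonposDegSubring R := by
    induction k with
    | zero => exact zero_mem _
    | succ k ih =>
      rw [Function.iterate_succ_apply']
      exact mul_mem hh (sub_mem hW (mul_mem X_mem_nonposDegSubring (pow_mem ih 2)))
  refine ⟨Y, fun i j hij => by rw [hcoeff]; exact hΦ _ i j hij, ?_⟩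
  have hY' : h * (W - X * Y ^ 2) = Y := hY
  linear_combination (-2 * X) * hY' + (X * (W - X * Y ^ 2)) * h2

end NonposDeg

section TuttePolynomials

open Polynomial

/-- If `F = p(θ) / ((1-θ)ᵃ(1-4θ)ᵉ)`, then `λ dF/dλ = (eulerStep a e p)(θ) / ((1-θ)ᵃ(1-4θ)ᵉ⁺²)`,
because `λ dθ/dλ = θ(1-θ)/(1-4θ)`. -/
noncomputable def eulerStep (a e : ℕ) (p : ℝ[X]) : ℝ[X] :=
  X * ((1 - X) * (1 - 4 * X) * derivative p
    + ((a : ℝ[X]) * (1 - 4 * X) + 4 * (e : ℝ[X]) * (1 - X)) * p)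

noncomputable def tuttePoly : ℕ → ℝ[X]
  | 0 => 1 - 2 * X
  | k + 1 => eulerStep 3 (2 * k) (tuttePoly k)

theorem tuttePoly_one : tuttePoly 1 = X - 8 * X ^ 2 + 16 * X ^ 3 := by
  simp [tuttePoly, eulerStep]
  ring

theorem tuttePoly_two : tuttePoly 2 = X - 10 * X ^ 2 + 24 * X ^ 3 + 32 * X ^ 4 - 128 * X ^ 5 := by
  rw [tuttePoly, tuttePoly_one, eulerStep]
  simp [map_ofNat]
  ring

theorem tuttePoly_three : tuttePoly 3 =
    X - 6 * X ^ 2 - 42 * X ^ 3 + 424 * X ^ 4 - 1056 * X ^ 5 + 384 * X ^ 6 + 1024 * X ^ 7 := by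
  rw [tuttePoly, tuttePoly_two, eulerStep]
  simp [map_ofNat]
  ring

theorem tuttePoly_four : tuttePoly 4 = X + 10 * X ^ 2 - 260 * X ^ 3 + 1360 * X ^ 4 - 1304 * X ^ 5
    - 8288 * X ^ 6 + 22912 * X ^ 7 - 12800 * X ^ 8 - 8192 * X ^ 9 := by
  rw [tuttePoly, tuttePoly_three, eulerStep]
  simp [map_ofNat]
  ring

theorem tuttePoly_relation :
    6 * (1 - 4 * X) ^ 6 * tuttePoly 1 + 33 * (1 - 4 * X) ^ 4 * tuttePoly 2
      + 54 * (1 - 4 * X) ^ 2 * tuttePoly 3 + 27 * tuttePoly 4 =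
    X * (1 - X) ^ 3 * (120 * (1 - 4 * X) ^ 8 * tuttePoly 0 + 616 * (1 - 4 * X) ^ 6 * tuttePoly 1
      + 1136 * (1 - 4 * X) ^ 4 * tuttePoly 2 + 896 * (1 - 4 * X) ^ 2 * tuttePoly 3
      + 256 * tuttePoly 4) := by
  rw [tuttePoly_one, tuttePoly_two, tuttePoly_three, tuttePoly_four, tuttePoly]
  ring

end TuttePolynomials

section TutteSeries

open PowerSeries

/-- The hypergeometric equation `3D(D+1)(3D+1)(3D+2) V = λ (4D+2)(4D+3)(4D+4)(4D+5) V` for the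
Euler operator `D`, expanded. -/
def TutteODE (V : ℝ⟦X⟧) : Prop :=
  6 * (eulerOp ℝ)^[1] V + 33 * (eulerOp ℝ)^[2] V + 54 * (eulerOp ℝ)^[3] V
      + 27 * (eulerOp ℝ)^[4] V =
    X * (120 * (eulerOp ℝ)^[0] V + 616 * (eulerOp ℝ)^[1] V + 1136 * (eulerOp ℝ)^[2] V
      + 896 * (eulerOp ℝ)^[3] V + 256 * (eulerOp ℝ)^[4] V)

variable {θ : ℝ⟦X⟧}

theorem eulerOp_mul_one_sub_four_mul (hθ0 : constantCoeff θ = 0) (hθ : θ * (1 - θ) ^ 3 = X) :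
    eulerOp ℝ θ * (1 - 4 * θ) = θ * (1 - θ) := by
  have hD := congrArg (eulerOp ℝ) hθ
  have hpow := (eulerOp ℝ).map_pow_mul_self (1 - θ) 3
  rw [Derivation.leibniz, eulerOp_X, smul_eq_mul, smul_eq_mul] at hD
  simp only [map_sub, Derivation.map_one_eq_zero] at hpow
  have hne : (1 - θ) ^ 3 ≠ 0 := pow_ne_zero _ (ne_zero_of_map (f := constantCoeff) (by simp [hθ0]))
  refine mul_left_cancel₀ hne ?_
  linear_combination (1 - θ) * hD - θ * hpow - (1 - θ) * hθ

theorem eulerOp_aeval_mul (hθ0 : constantCoeff θ = 0) (hθ : θ * (1 - θ) ^ 3 = X) (p : ℝ[X]) :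
    eulerOp ℝ (Polynomial.aeval θ p) * (1 - 4 * θ) =
      θ * (1 - θ) * Polynomial.aeval θ (Polynomial.derivative p) := by
  rw [Derivation.map_aeval, smul_eq_mul, mul_assoc, eulerOp_mul_one_sub_four_mul hθ0 hθ]
  ring

theorem eulerOp_mul_eq_aeval_eulerStep (hθ0 : constantCoeff θ = 0) (hθ : θ * (1 - θ) ^ 3 = X)
    {F : ℝ⟦X⟧} {a e : ℕ} {p : ℝ[X]}
    (hF : F * (1 - θ) ^ a * (1 - 4 * θ) ^ e = Polynomial.aeval θ p) :
    eulerOp ℝ F * (1 - θ) ^ a * (1 - 4 * θ) ^ (e + 2) = Polynomial.aeval θ (eulerStep a e p) := by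
  have hD := congrArg (eulerOp ℝ) hF
  simp only [Derivation.leibniz, smul_eq_mul] at hD
  have hA := (eulerOp ℝ).map_pow_mul_self (1 - θ) a
  have hE := (eulerOp ℝ).map_pow_mul_self (1 - 4 * θ) e
  have h4 : eulerOp ℝ (4 : ℝ⟦X⟧) = 0 := by simpa using (eulerOp ℝ).map_natCast 4
  simp only [map_sub, Derivation.leibniz, h4, smul_eq_mul, Derivation.map_one_eq_zero] at hA hE
  have hθ' := eulerOp_mul_one_sub_four_mul hθ0 hθ
  have hp := eulerOp_aeval_mul hθ0 hθ p
  refine mul_left_cancel₀ (ne_zero_of_map (f := constantCoeff) (by simp [hθ0]) : 1 - θ ≠ 0) ?_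
  simp only [eulerStep, map_mul, map_add, map_sub, map_one, map_natCast, map_ofNat,
    Polynomial.aeval_X]
  linear_combination (1 - θ) * (1 - 4 * θ) ^ 2 * hD - F * (1 - 4 * θ) ^ e * (1 - 4 * θ) ^ 2 * hA
    - F * (1 - θ) ^ a * (1 - θ) * (1 - 4 * θ) * hE + (1 - θ) * (1 - 4 * θ) * hp
    + (a * (1 - 4 * θ) + 4 * e * (1 - θ))
      * (F * (1 - θ) ^ a * (1 - 4 * θ) ^ e * hθ' + θ * (1 - θ) * hF)

theorem iterate_eulerOp_mul_eq_aeval_tuttePoly (hθ0 : constantCoeff θ = 0)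
    (hθ : θ * (1 - θ) ^ 3 = X) {V : ℝ⟦X⟧} (hV : V * (1 - θ) ^ 3 = 1 - 2 * θ) (k : ℕ) :
    (eulerOp ℝ)^[k] V * (1 - θ) ^ 3 * (1 - 4 * θ) ^ (2 * k) = Polynomial.aeval θ (tuttePoly k) := by
  induction k with
  | zero => simp [tuttePoly, hV, map_ofNat]
  | succ k ih =>
    rw [Function.iterate_succ_apply', tuttePoly, show 2 * (k + 1) = 2 * k + 2 by ring]
    exact eulerOp_mul_eq_aeval_eulerStep hθ0 hθ ih

theorem tutteODE_of_mul_eq (hθ0 : constantCoeff θ = 0) (hθ : θ * (1 - θ) ^ 3 = X) {V : ℝ⟦X⟧}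
    (hV : V * (1 - θ) ^ 3 = 1 - 2 * θ) : TutteODE V := by
  have h := iterate_eulerOp_mul_eq_aeval_tuttePoly hθ0 hθ hV
  have hrel := congrArg (Polynomial.aeval θ) tuttePoly_relation
  simp only [map_add, map_mul, map_pow, map_sub, map_one, map_ofNat, Polynomial.aeval_X] at hrel
  set P := fun k => Polynomial.aeval θ (tuttePoly k)
  have hne : (1 - θ) ^ 3 * (1 - 4 * θ) ^ 8 ≠ 0 :=
    ne_zero_of_map (f := constantCoeff) (by simp [hθ0])
  refine mul_right_cancel₀ hne ?_
  linear_combination (6 - 616 * X) * (1 - 4 * θ) ^ 6 * h 1 + (33 - 1136 * X) * (1 - 4 * θ) ^ 4 * h 2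
    + (54 - 896 * X) * (1 - 4 * θ) ^ 2 * h 3 + (27 - 256 * X) * h 4
    - 120 * X * (1 - 4 * θ) ^ 8 * h 0 + hrel
    + (120 * (1 - 4 * θ) ^ 8 * P 0 + 616 * (1 - 4 * θ) ^ 6 * P 1 + 1136 * (1 - 4 * θ) ^ 4 * P 2
      + 896 * (1 - 4 * θ) ^ 2 * P 3 + 256 * P 4) * hθ

theorem TutteODE.coeff_succ {V : ℝ⟦X⟧} (hV : TutteODE V) (m : ℕ) :
    ((m + 2) * (3 * m + 5) * (3 * m + 4) * (3 * m + 3) : ℝ) * coeff (m + 1) V =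
      (4 * m + 5) * (4 * m + 4) * (4 * m + 3) * (4 * m + 2) * coeff m V := by
  have h := congrArg (coeff (m + 1)) hV
  simp only [map_add, coeff_ofNat_mul, coeff_iterate_eulerOp, coeff_succ_X_mul] at h
  push_cast at h
  linear_combination h

noncomputable def tutteCoeff (i : ℕ) : ℝ :=
  2 * (Nat.factorial (4 * i + 1) : ℝ) /
    ((Nat.factorial (i + 1) : ℝ) * (Nat.factorial (3 * i + 2) : ℝ))

theorem tutteCoeff_zero : tutteCoeff 0 = 1 := by
  norm_num [tutteCoeff]

theorem tutteCoeff_succ (m : ℕ) :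
    ((m + 2) * (3 * m + 5) * (3 * m + 4) * (3 * m + 3) : ℝ) * tutteCoeff (m + 1) =
      (4 * m + 5) * (4 * m + 4) * (4 * m + 3) * (4 * m + 2) * tutteCoeff m := by
  rw [tutteCoeff, tutteCoeff, show 4 * (m + 1) + 1 = 4 * m + 1 + 1 + 1 + 1 + 1 by ring,
    show 3 * (m + 1) + 2 = 3 * m + 2 + 1 + 1 + 1 by ring]
  simp only [Nat.factorial_succ]
  push_cast
  field_simp
  ring

theorem TutteODE.coeff_eq_tutteCoeff {V : ℝ⟦X⟧} (hV : TutteODE V) (h0 : constantCoeff V = 1)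
    (m : ℕ) : coeff m V = tutteCoeff m := by
  induction m with
  | zero => rw [coeff_zero_eq_constantCoeff_apply, h0, tutteCoeff_zero]
  | succ m ih =>
    refine mul_left_cancel₀ (by positivity) ((hV.coeff_succ m).trans ?_)
    rw [ih, tutteCoeff_succ]

theorem mk_tutteCoeff_mul (hθ0 : constantCoeff θ = 0) (hθ : θ * (1 - θ) ^ 3 = X) :
    mk tutteCoeff * (1 - θ) ^ 3 = 1 - 2 * θ := by
  set V := (1 - 2 * θ) * ((1 - θ) ^ 3)⁻¹
  have hV : V * (1 - θ) ^ 3 = 1 - 2 * θ := by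
    rw [mul_assoc, PowerSeries.inv_mul_cancel _ (by simp [hθ0]), mul_one]
  have h0 : constantCoeff V = 1 := by simp [V, hθ0]
  convert hV using 2
  ext m
  rw [coeff_mk, (tutteODE_of_mul_eq hθ0 hθ hV).coeff_eq_tutteCoeff h0]

theorem one_add_tutteSeries_mul (hθ0 : constantCoeff θ = 0) (hθ : θ * (1 - θ) ^ 3 = X) :
    (1 + tutteSeries) * (1 - map C θ) ^ 3 = 1 - 2 * map C θ := by
  have h := congrArg (map C) (mk_tutteCoeff_mul hθ0 hθ)
  simp only [map_mul, map_pow, map_sub, map_one, map_ofNat] at h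
  convert h using 2
  ext i : 1
  rw [map_add, coeff_map, coeff_mk, tutteSeries, coeff_mk, coeff_one]
  split_ifs with hi
  · simp [hi, tutteCoeff_zero]
  · rw [zero_add, tutteCoeff]

end TutteSeries

theorem eq_of_sq_eq_of_map_eq_one {A B : Type*} [CommRing A] [NoZeroDivisors A] [CommRing B]
    (φ : A →+* B) (h2 : (2 : B) ≠ 0) {x y : A} (h : x ^ 2 = y ^ 2) (hx : φ x = 1) (hy : φ y = 1) :
    x = y := by
  refine (sq_eq_sq_iff_eq_or_eq_neg.mp h).resolve_right fun hneg => h2 ?_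
  have := congrArg φ hneg
  rw [map_neg, hx, hy] at this
  linear_combination this

theorem tutte_sq_identity {A : Type*} [CommRing A] {s l t τ inv r g : A}
    (hl : l = t * (1 - t) ^ 3) (hτ : (1 + τ) * (1 - t) ^ 3 = 1 - 2 * t)
    (hinv : (1 + l * s) * inv = 1) (hr : r = s * inv + τ) (hg : g ^ 2 = (1 + r) ^ 2 - 4 * s) :
    ((1 - t) ^ 4 * ((1 + l * s) * g)) ^ 2 =
      (1 - (1 - t) ^ 4 * s) ^ 2 * ((1 - 2 * t) ^ 2 * (1 - t) ^ 2 - 4 * l * (l * s)) := by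
  have h1 :
      (1 - t) ^ 3 * ((1 + l * s) * (1 + r)) = (1 - 2 * t) * (1 + l * s) + (1 - t) ^ 3 * s := by
    linear_combination (1 + l * s) * hτ + (1 - t) ^ 3 * s * hinv + (1 - t) ^ 3 * (1 + l * s) * hr
  subst hl
  set P := 1 + t * (1 - t) ^ 3 * s
  linear_combination (1 - t) ^ 8 * P ^ 2 * hg
    + (1 - t) ^ 2 * ((1 - t) ^ 3 * (P * (1 + r)) + (1 - 2 * t) * P + (1 - t) ^ 3 * s) * h1

theorem exists_sq_eq_tutte_radicand {θ : PowerSeries ℝ} (hθ0 : PowerSeries.constantCoeff θ = 0) :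
    ∃ Y ∈ nonposDegSubring ℝ, (1 + lVar * Y) ^ 2 =
      (1 - 2 * PowerSeries.map PowerSeries.C θ) ^ 2 * (1 - PowerSeries.map PowerSeries.C θ) ^ 2
        - 4 * lVar * (lVar * sVar) := by
  obtain ⟨q, hq⟩ : PowerSeries.X ∣ (1 - 2 * θ) ^ 2 * (1 - θ) ^ 2 - 1 :=
    PowerSeries.X_dvd_iff.mpr (by simp [hθ0])
  obtain ⟨Y, hYmem, hY⟩ := exists_sq_eq_one_add_X_mul
    (W := PowerSeries.map PowerSeries.C q - 4 * (sVar * lVar))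
    (sub_mem (map_C_mem_nonposDegSubring q) (mul_mem (by simp) C_X_mul_X_mem_nonposDegSubring))
  refine ⟨Y, hYmem, ?_⟩
  have hq' := congrArg (PowerSeries.map PowerSeries.C) hq
  simp only [map_sub, map_mul, map_pow, map_one, map_ofNat, PowerSeries.map_X] at hq'
  rw [show lVar = PowerSeries.X from rfl] at hY ⊢
  linear_combination hY - hq'

/-- With `r = s·(1+λs)⁻¹ + τ(λ)`, `g` the unique square root of
`(1+r)² − 4s` with constant coefficient `1`, and `b = s + (1+λs)·g`, the series `b` is of
degree `≤ 0`: every monomial `sⁱλʲ` occurring in `b` satisfies `i ≤ j`. -/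
theorem b_series_deg_nonpos
    (inv r g b : PowerSeries (PowerSeries ℝ))
    (hinv : (1 + lVar * sVar) * inv = 1)
    (hr : r = sVar * inv + tutteSeries)
    (hg1 : PowerSeries.constantCoeff (R := ℝ)
      (PowerSeries.constantCoeff (R := PowerSeries ℝ) g) = 1)
    (hg2 : g ^ 2 = (1 + r) ^ 2 - 4 * sVar)
    (hb : b = sVar + (1 + lVar * sVar) * g) :
    ∀ i j : ℕ,
      PowerSeries.coeff (R := ℝ) i (PowerSeries.coeff (R := PowerSeries ℝ) j b) ≠ 0 → i ≤ j := by
  obtain ⟨θ, hθ0, hθ⟩ := PowerSeries.exists_mul_one_sub_pow_three_eq_X (R := ℝ)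
  set M : PowerSeries ℝ →+* PowerSeries (PowerSeries ℝ) := PowerSeries.map PowerSeries.C
  obtain ⟨Y, hYmem, hY⟩ := exists_sq_eq_tutte_radicand hθ0
  have hl : lVar = M θ * (1 - M θ) ^ 3 := by
    simpa [M, lVar] using (congrArg M hθ).symm
  have key :
      (1 - M θ) ^ 4 * ((1 + lVar * sVar) * g) = (1 - (1 - M θ) ^ 4 * sVar) * (1 + lVar * Y) :=
    eq_of_sq_eq_of_map_eq_one (PowerSeries.constantCoeff.comp PowerSeries.constantCoeff) two_ne_zero
      (by rw [tutte_sq_identity hl (one_add_tutteSeries_mul hθ0 hθ) hinv hr hg2, mul_pow, hY])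
      (by simp [M, PowerSeries.constantCoeff_map, hθ0, hg1, lVar, sVar])
      (by simp [M, PowerSeries.constantCoeff_map, hθ0, lVar, sVar])
  have hw : (M (1 - θ)⁻¹ * (1 - M θ)) ^ 4 = 1 := by
    rw [← map_one M, ← map_sub, ← map_mul, PowerSeries.inv_mul_cancel _ (by simp [hθ0]), map_one,
      one_pow]
  have hb' : b = M (1 - θ)⁻¹ ^ 4 * (1 + lVar * Y) - sVar * lVar * Y := by
    linear_combination hb + M (1 - θ)⁻¹ ^ 4 * key
      - ((1 + lVar * sVar) * g + sVar * (1 + lVar * Y)) * hw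
  rw [← mem_nonposDegSubring_iff, hb']
  exact sub_mem (mul_mem (pow_mem (map_C_mem_nonposDegSubring _) 4)
    (add_mem (one_mem _) (mul_mem X_mem_nonposDegSubring hYmem)))
    (mul_mem C_X_mul_X_mem_nonposDegSubring hYmem)
end

section
/- Let b ∈ ℝ⟦s,λ⟧ be defined as follows: with Tutte's series τ, set r := s·(1+λs)^{−1} + τ(λ), let g ∈ ℝ⟦s,λ⟧ be the unique formal power series with constant coefficient 1 satisfying g² = (1+r)² − 4s, and set b := s + (1+λs)·g. Writing b = Σ_{l=0}^∞ B_l(s)·λˡ with B_l ∈ ℝ⟦s⟧ under the identification ℝ⟦s,λ⟧ ≅ (ℝ⟦s⟧)⟦λ⟧, each B_l is a polynomial in s of degree at most 2l. -/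
/-! Let `c = 1 + λ c⁴`. The powers of `c` satisfy `c^(k+2) = c^(k+1) + λ c^(k+5)`, the
recurrence of the Raney numbers, which identifies their coefficients and gives
`1 + τ = 2c² - c³`. In terms of `c`, `(1 + λs)² ((1 + r)² - 4s) = (c⁴ - s)² w` with
`w = (1 + λ(2c² - c³))² - 8λ - 8λ²c⁴ - 4λ²s`, whose `λˡ`-coefficient is a polynomial in `s` of
degree `≤ l`, i.e. `w` is a power series in `λ` and `λs`. Since `c⁴ - s` is a unit,
`(1 + λs) g = (c⁴ - s) y` with `y² = w`, and the constant term of `g` forces that of `y` to be `1`.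
The coefficients of such a square root are computed recursively from those of `w` by sums,
products and halving, so `y` is again a power series in `λ` and `λs`. Hence the
`λˡ`-coefficient of `b = c⁴ y + s (1 - y)` has degree `≤ l + 1 ≤ 2l` for `l ≥ 1`, and `B₀ = 1`. -/

open PowerSeries

namespace PowerSeries

variable {R : Type*} [CommRing R]

theorem eq_zero_of_forall_X_pow_dvd {f : R⟦X⟧} (h : ∀ n, X ^ n ∣ f) : f = 0 := by
  ext k
  exact X_pow_dvd_iff.mp (h (k + 1)) k k.lt_succ_self

/-- Banach's fixed point theorem for the `X`-adic metric. -/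
theorem exists_fixedPoint_of_X_pow_dvd (Φ : R⟦X⟧ → R⟦X⟧)
    (hΦ : ∀ f g n, X ^ n ∣ f - g → X ^ (n + 1) ∣ Φ f - Φ g) : ∃ f, Φ f = f := by
  set u : ℕ → R⟦X⟧ := fun n => Φ^[n] 0
  have hu_succ (n : ℕ) : Φ (u n) = u (n + 1) := (Function.iterate_succ_apply' Φ n 0).symm
  have step (n : ℕ) : X ^ n ∣ u (n + 1) - u n := by
    induction n with
    | zero => simp
    | succ n ih => simpa only [hu_succ] using hΦ _ _ _ ih
  have stable {n m : ℕ} (h : n ≤ m) : X ^ n ∣ u m - u n := by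
    induction m, h using Nat.le_induction with
    | base => simp
    | succ m hnm ih =>
      rw [← sub_add_sub_cancel]
      exact dvd_add ((pow_dvd_pow X hnm).trans (step m)) ih
  set f : R⟦X⟧ := mk fun k => coeff k (u (k + 1))
  have hf (n : ℕ) : X ^ n ∣ f - u n := by
    refine X_pow_dvd_iff.mpr fun k hk => ?_
    have := X_pow_dvd_iff.mp (stable hk) k k.lt_succ_self
    simp only [map_sub, coeff_mk, f] at this ⊢
    linear_combination -this
  refine ⟨f, sub_eq_zero.mp (eq_zero_of_forall_X_pow_dvd fun n => ?_)⟩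
  have h := dvd_sub (hΦ _ _ _ (hf n)) (hf (n + 1))
  rw [hu_succ, sub_sub_sub_cancel_right] at h
  exact (pow_dvd_pow X n.le_succ).trans h

theorem exists_eq_one_add_X_mul_pow (d : ℕ) : ∃ c : R⟦X⟧, c = 1 + X * c ^ d := by
  obtain ⟨c, hc⟩ := exists_fixedPoint_of_X_pow_dvd (fun c : R⟦X⟧ => 1 + X * c ^ d)
    fun f g n h => by
      rw [add_sub_add_left_eq_sub, ← mul_sub, pow_succ']
      exact mul_dvd_mul_left X (h.trans (sub_dvd_pow_sub_pow f g d))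
  exact ⟨c, hc.symm⟩

end PowerSeries

section Raney

open Nat

variable {K : Type*} [Field K] [CharZero K]

variable (K) in
/-- The Raney number `R_{m+1,k+1}(n) = (k+1)/((m+1)n+k+1) · C((m+1)n+k+1, n)`. -/
noncomputable def raney (m k n : ℕ) : K :=
  (k + 1) * ((m + 1) * n + k)! / (n ! * (m * n + k + 1)!)

theorem raney_denom_ne_zero (m k n : ℕ) : (n ! * (m * n + k + 1)! : K) ≠ 0 := by
  norm_cast; positivity

theorem raney_zero (m k : ℕ) : raney K m k 0 = 1 := by
  rw [raney, div_eq_one_iff_eq (raney_denom_ne_zero m k 0)]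
  norm_cast
  simp [factorial_succ]

theorem raney_succ_zero (m n : ℕ) : raney K m 0 (n + 1) = raney K m m n := by
  rw [raney, raney, div_eq_div_iff (raney_denom_ne_zero m 0 (n + 1)) (raney_denom_ne_zero m m n)]
  norm_cast
  rw [show (m + 1) * (n + 1) + 0 = (m + 1) * n + m + 1 by ring,
    show m * (n + 1) + 0 + 1 = m * n + m + 1 by ring]
  simp only [factorial_succ]
  ring

theorem raney_succ_succ (m k n : ℕ) :
    raney K m (k + 1) (n + 1) = raney K m k (n + 1) + raney K m (k + m + 1) n := by
  rw [raney, raney, raney, div_add_div _ _ (raney_denom_ne_zero _ _ _) (raney_denom_ne_zero _ _ _),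
    div_eq_div_iff (raney_denom_ne_zero _ _ _)
      (mul_ne_zero (raney_denom_ne_zero _ _ _) (raney_denom_ne_zero _ _ _))]
  norm_cast
  rw [show (m + 1) * (n + 1) + (k + 1) = (m + 1) * n + k + m + 1 + 1 by ring,
    show (m + 1) * (n + 1) + k = (m + 1) * n + k + m + 1 by ring,
    show (m + 1) * n + (k + m + 1) = (m + 1) * n + k + m + 1 by ring,
    show m * (n + 1) + (k + 1) + 1 = m * n + k + m + 1 + 1 by ring,
    show m * (n + 1) + k + 1 = m * n + k + m + 1 by ring,
    show m * n + (k + m + 1) + 1 = m * n + k + m + 1 + 1 by ring]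
  simp only [factorial_succ]
  ring

theorem two_mul_raney_sub_raney (n : ℕ) :
    2 * raney K 3 1 n - raney K 3 2 n = 2 * (4 * n + 1)! / ((n + 1)! * (3 * n + 2)!) := by
  have hd : ((n + 1)! * (3 * n + 2)! : K) ≠ 0 := by norm_cast; positivity
  rw [raney, raney, sub_eq_iff_eq_add, mul_div_assoc',
    div_add_div _ _ hd (raney_denom_ne_zero _ _ _),
    div_eq_div_iff (raney_denom_ne_zero _ _ _) (mul_ne_zero hd (raney_denom_ne_zero _ _ _))]
  norm_cast
  rw [show (3 + 1) * n + 1 = 4 * n + 1 by ring, show (3 + 1) * n + 2 = 4 * n + 1 + 1 by ring,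
    show 3 * n + 1 + 1 = 3 * n + 2 by ring]
  simp only [factorial_succ]
  ring

theorem coeff_pow_of_eq_one_add_X_mul_pow {m : ℕ} {c : K⟦X⟧} (hc : c = 1 + X * c ^ (m + 1))
    (k n : ℕ) : coeff n (c ^ (k + 1)) = raney K m k n := by
  induction n generalizing k with
  | zero =>
    have : constantCoeff c = 1 := by rw [hc]; simp
    rw [coeff_zero_eq_constantCoeff_apply, map_pow, this, one_pow, raney_zero]
  | succ n ih =>
    induction k with
    | zero =>
      rw [zero_add, pow_one, raney_succ_zero, ← ih]
      conv_lhs => rw [hc]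
      simp
    | succ k ihk =>
      have : c ^ (k + 1 + 1) = c ^ (k + 1) + X * c ^ (k + m + 1 + 1) := by
        linear_combination c ^ (k + 1) * hc
      rw [this, map_add, coeff_succ_X_mul, ihk, ih, raney_succ_succ]

end Raney

theorem one_add_tutteSeries {c : ℝ⟦X⟧} (hc : c = 1 + X * c ^ 4) :
    1 + tutteSeries = map (C (R := ℝ)) (2 * c ^ 2 - c ^ 3) := by
  ext1 n
  have h2 : coeff n (c ^ 2) = raney ℝ 3 1 n := coeff_pow_of_eq_one_add_X_mul_pow hc 1 n
  have h3 : coeff n (c ^ 3) = raney ℝ 3 2 n := coeff_pow_of_eq_one_add_X_mul_pow hc 2 n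
  rw [coeff_map, map_sub, ← map_ofNat C 2, coeff_C_mul, h2, h3, two_mul_raney_sub_raney, map_add,
    tutteSeries, coeff_mk, coeff_one]
  rcases n with _ | n <;> simp

section Discriminant

variable {A : Type*} [CommRing A]

def quarticDisc (a l s : A) : A :=
  (1 + l * (2 * a ^ 2 - a ^ 3)) ^ 2 - 8 * l - 8 * l ^ 2 * a ^ 4 - 4 * l ^ 2 * s

theorem sq_sub_eq_sq_mul_quarticDisc {a l s : A} (ha : a = 1 + l * a ^ 4) :
    ((2 * a ^ 2 - a ^ 3) * (1 + l * s) + s) ^ 2 - 4 * s * (1 + l * s) ^ 2 =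
      (a ^ 4 - s) ^ 2 * quarticDisc a l s := by
  rw [quarticDisc]
  linear_combination (-(4 * a ^ 4 + a ^ 6 + a ^ 7 + 4 * l * a ^ 8 + 4 * l * a ^ 9 - l * a ^ 10)
    - s * (-4 - 4 * a - 2 * a ^ 3 - 4 * l * a ^ 4 - 8 * l * a ^ 5 + 2 * l * a ^ 6)) * ha

theorem sq_one_add_mul_mul_eq_sq_mul_quarticDisc {a l s t v r g : A} (ha : a = 1 + l * a ^ 4)
    (ht : 1 + t = 2 * a ^ 2 - a ^ 3) (hv : (1 + l * s) * v = 1) (hr : r = s * v + t)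
    (hg : g ^ 2 = (1 + r) ^ 2 - 4 * s) :
    ((1 + l * s) * g) ^ 2 = (a ^ 4 - s) ^ 2 * quarticDisc a l s := by
  rw [mul_pow, hg, hr, ← sq_sub_eq_sq_mul_quarticDisc ha]
  linear_combination
    s * ((1 + l * s) * (1 + (s * v + t)) + ((1 + t) * (1 + l * s) + s)) * hv +
      ((1 + t) * (1 + l * s) + s + ((2 * a ^ 2 - a ^ 3) * (1 + l * s) + s)) * (1 + l * s) * ht

end Discriminant

section DegreeBounded

variable (R : Type*) [CommRing R]

noncomputable def polynomialsDegreeLE (n : ℕ) : Submodule R R⟦X⟧ :=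
  (Polynomial.degreeLE R n).map (Polynomial.coeToPowerSeries.algHom R).toLinearMap

variable {R}

theorem mem_polynomialsDegreeLE {n : ℕ} {f : R⟦X⟧} :
    f ∈ polynomialsDegreeLE R n ↔ ∃ p : Polynomial R, p.degree ≤ n ∧ (p : R⟦X⟧) = f := by
  simp [polynomialsDegreeLE, Polynomial.mem_degreeLE]

theorem polynomialsDegreeLE_mono {m n : ℕ} (h : m ≤ n) :
    polynomialsDegreeLE R m ≤ polynomialsDegreeLE R n :=
  Submodule.map_mono (Polynomial.degreeLE_mono (by exact_mod_cast h))

theorem one_mem_polynomialsDegreeLE (n : ℕ) : (1 : R⟦X⟧) ∈ polynomialsDegreeLE R n :=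
  mem_polynomialsDegreeLE.mpr ⟨1, Polynomial.degree_one_le.trans (by exact_mod_cast n.zero_le),
    Polynomial.coe_one⟩

theorem C_mem_polynomialsDegreeLE (r : R) (n : ℕ) : C r ∈ polynomialsDegreeLE R n :=
  mem_polynomialsDegreeLE.mpr ⟨Polynomial.C r,
    Polynomial.degree_C_le.trans (by exact_mod_cast n.zero_le), Polynomial.coe_C r⟩

theorem X_mem_polynomialsDegreeLE_one : (X : R⟦X⟧) ∈ polynomialsDegreeLE R 1 :=
  mem_polynomialsDegreeLE.mpr ⟨Polynomial.X, Polynomial.degree_X_le, Polynomial.coe_X⟩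

theorem mul_mem_polynomialsDegreeLE {m n : ℕ} {f g : R⟦X⟧} (hf : f ∈ polynomialsDegreeLE R m)
    (hg : g ∈ polynomialsDegreeLE R n) : f * g ∈ polynomialsDegreeLE R (m + n) := by
  obtain ⟨p, hp, rfl⟩ := mem_polynomialsDegreeLE.mp hf
  obtain ⟨q, hq, rfl⟩ := mem_polynomialsDegreeLE.mp hg
  exact mem_polynomialsDegreeLE.mpr
    ⟨p * q, (Polynomial.degree_mul_le p q).trans (by push_cast; exact add_le_add hp hq),
      Polynomial.coe_mul p q⟩

variable (R) in
/-- The power series in `λ` and `λ s`, inside `R⟦s⟧⟦λ⟧`. -/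
def degreeBoundedSubring : Subring R⟦X⟧⟦X⟧ where
  carrier := {f | ∀ l, coeff l f ∈ polynomialsDegreeLE R l}
  zero_mem' l := by simp
  one_mem' l := by
    rw [coeff_one]
    split_ifs
    · exact one_mem_polynomialsDegreeLE l
    · exact zero_mem _
  add_mem' hf hg l := by rw [map_add]; exact add_mem (hf l) (hg l)
  neg_mem' hf l := by rw [map_neg]; exact neg_mem (hf l)
  mul_mem' hf hg l := by
    rw [coeff_mul]
    refine Submodule.sum_mem _ fun ij hij => ?_
    rw [← Finset.HasAntidiagonal.mem_antidiagonal.mp hij]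
    exact mul_mem_polynomialsDegreeLE (hf ij.1) (hg ij.2)

theorem map_C_mem_degreeBoundedSubring (f : R⟦X⟧) :
    map (C (R := R)) f ∈ degreeBoundedSubring R := fun l => by
  rw [coeff_map]; exact C_mem_polynomialsDegreeLE _ l

theorem X_mem_degreeBoundedSubring : (X : R⟦X⟧⟦X⟧) ∈ degreeBoundedSubring R := fun l => by
  rw [coeff_X]
  split_ifs
  · exact one_mem_polynomialsDegreeLE l
  · exact zero_mem _

theorem X_mul_C_X_mem_degreeBoundedSubring :
    (X * C X : R⟦X⟧⟦X⟧) ∈ degreeBoundedSubring R := fun l => by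
  rw [mul_comm, coeff_C_mul, coeff_X]
  split_ifs with h
  · subst h; simpa using X_mem_polynomialsDegreeLE_one
  · simp

theorem quarticDisc_mem_degreeBoundedSubring {a : R⟦X⟧⟦X⟧} (ha : a ∈ degreeBoundedSubring R) :
    quarticDisc a X (C X) ∈ degreeBoundedSubring R := by
  have hX := X_mem_degreeBoundedSubring (R := R)
  have hcubic : 2 * a ^ 2 - a ^ 3 ∈ degreeBoundedSubring R :=
    sub_mem (mul_mem (ofNat_mem _ 2) (pow_mem ha 2)) (pow_mem ha 3)
  rw [quarticDisc, show (4 : R⟦X⟧⟦X⟧) * X ^ 2 * C X = 4 * X * (X * C X) by ring]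
  exact sub_mem (sub_mem (sub_mem (pow_mem (add_mem (one_mem _) (mul_mem hX hcubic)) 2)
    (mul_mem (ofNat_mem _ 8) hX)) (mul_mem (mul_mem (ofNat_mem _ 8) (pow_mem hX 2)) (pow_mem ha 4)))
    (mul_mem (mul_mem (ofNat_mem _ 4) hX) X_mul_C_X_mem_degreeBoundedSubring)

theorem mem_degreeBoundedSubring_of_sq_mem {K : Type*} [Field K] [NeZero (2 : K)]
    {y : K⟦X⟧⟦X⟧} (hy0 : constantCoeff y = 1) (hy : y ^ 2 ∈ degreeBoundedSubring K) :
    y ∈ degreeBoundedSubring K := by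
  intro l
  induction l using Nat.strong_induction_on with | _ l ih => ?_
  rcases l with _ | n
  · rw [coeff_zero_eq_constantCoeff_apply, hy0]
    exact one_mem_polynomialsDegreeLE 0
  -- with `z = y - 1`: `y² = 1 + 2z + z²`, and `z²` only involves lower coefficients of `y`
  have hz : coeff (n + 1) ((y - 1) ^ 2) ∈ polynomialsDegreeLE K (n + 1) := by
    rw [pow_two, coeff_mul]
    refine Submodule.sum_mem _ fun ij hij => ?_
    obtain ⟨i, j⟩ := ij
    have hij : i + j = n + 1 := Finset.HasAntidiagonal.mem_antidiagonal.mp hij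
    rcases Nat.eq_zero_or_pos i with rfl | hi
    · simp [hy0]
    rcases Nat.eq_zero_or_pos j with rfl | hj
    · simp [hy0]
    rw [← hij, map_sub, map_sub, coeff_one, coeff_one, if_neg hi.ne', if_neg hj.ne', sub_zero,
      sub_zero]
    exact mul_mem_polynomialsDegreeLE (ih i (by omega)) (ih j (by omega))
  have hcoeff : coeff (n + 1) y =
      (2 : K)⁻¹ • (coeff (n + 1) (y ^ 2) - coeff (n + 1) ((y - 1) ^ 2)) := by
    have : y ^ 2 - (y - 1) ^ 2 = 2 * y - 1 := by ring
    rw [← map_sub, this, map_sub, coeff_one, if_neg n.succ_ne_zero, sub_zero, two_mul, map_add,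
      ← two_smul K, smul_smul, inv_mul_cancel₀ two_ne_zero, one_smul]
  rw [hcoeff]
  exact Submodule.smul_mem _ _ (sub_mem (hy _) hz)

theorem coeff_C_X_add_mul_mem {A y : R⟦X⟧⟦X⟧} (hA : A ∈ degreeBoundedSubring R)
    (hy : y ∈ degreeBoundedSubring R) (hy0 : constantCoeff y = 1) (l : ℕ) :
    coeff l (C X + (A - C X) * y) ∈ polynomialsDegreeLE R (2 * l) := by
  rw [show C X + (A - C X) * y = A * y + C X * (1 - y) by ring, map_add, coeff_C_mul]
  rcases l with _ | l
  · rw [coeff_zero_eq_constantCoeff_apply (1 - y), map_sub, map_one, hy0, sub_self, mul_zero,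
      mul_zero, add_zero]
    exact mul_mem hA hy 0
  refine add_mem (polynomialsDegreeLE_mono (by omega) (mul_mem hA hy (l + 1))) ?_
  rw [map_sub, coeff_one, if_neg l.succ_ne_zero, zero_sub, mul_neg]
  exact neg_mem (polynomialsDegreeLE_mono (by omega)
    (mul_mem_polynomialsDegreeLE X_mem_polynomialsDegreeLE_one (hy (l + 1))))

end DegreeBounded

theorem exists_eq_mul_of_sq_eq_sq_mul {R : Type*} [CommRing R] [IsDomain R] [NeZero (2 : R)]
    {G u w : R⟦X⟧⟦X⟧} (hG : constantCoeff (constantCoeff G) = 1)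
    (hu : constantCoeff (constantCoeff u) = 1) (hw : constantCoeff w = 1)
    (h : G ^ 2 = u ^ 2 * w) : ∃ y, G = u * y ∧ y ^ 2 = w ∧ constantCoeff y = 1 := by
  have hunit : IsUnit u := by
    rw [isUnit_iff_constantCoeff, isUnit_iff_constantCoeff, hu]; exact isUnit_one
  obtain ⟨y, rfl⟩ := isUnit_iff_forall_dvd.mp hunit G
  have hy2 : y ^ 2 = w := (hunit.pow 2).mul_left_cancel (by rw [← h]; ring)
  refine ⟨y, rfl, hy2, ?_⟩
  have : constantCoeff y ^ 2 = 1 ^ 2 := by rw [← map_pow, hy2, hw, one_pow]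
  refine (sq_eq_sq_iff_eq_or_eq_neg.mp this).resolve_right fun hneg => ?_
  rw [map_mul, hneg, map_mul, hu, map_neg, map_one, one_mul] at hG
  exact two_ne_zero (by linear_combination -hG : (2 : R) = 0)

theorem exists_quartic_root_one_add_tutteSeries :
    ∃ a ∈ degreeBoundedSubring ℝ, a = 1 + lVar * a ^ 4 ∧ 1 + tutteSeries = 2 * a ^ 2 - a ^ 3 := by
  obtain ⟨c, hc⟩ := exists_eq_one_add_X_mul_pow (R := ℝ) 4
  refine ⟨map C c, map_C_mem_degreeBoundedSubring c, ?_, ?_⟩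
  · simpa [lVar] using congrArg (map (C (R := ℝ))) hc
  · simp [one_add_tutteSeries hc, map_ofNat]

/-- With `r = s·(1+λs)⁻¹ + τ(λ)`, `g` the unique square root of
`(1+r)² − 4s` with constant coefficient `1`, and `b = s + (1+λs)·g`, writing
`b = Σ_l B_l(s)·λˡ` with `B_l ∈ ℝ⟦s⟧`, each `B_l` is a polynomial in `s` of degree at
most `2l`. -/
theorem b_series_coeffs_are_polynomials
    (inv r g b : PowerSeries (PowerSeries ℝ))
    (hinv : (1 + lVar * sVar) * inv = 1)
    (hr : r = sVar * inv + tutteSeries)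
    (hg1 : PowerSeries.constantCoeff (R := ℝ)
      (PowerSeries.constantCoeff (R := PowerSeries ℝ) g) = 1)
    (hg2 : g ^ 2 = (1 + r) ^ 2 - 4 * sVar)
    (hb : b = sVar + (1 + lVar * sVar) * g) :
    ∀ l : ℕ, ∃ p : Polynomial ℝ,
      p.degree ≤ (2 * l : ℕ) ∧
      (p : PowerSeries ℝ) = PowerSeries.coeff (R := PowerSeries ℝ) l b := by
  obtain ⟨a, ha_mem, ha, hτ⟩ := exists_quartic_root_one_add_tutteSeries
  have ha0 : constantCoeff a = 1 := by rw [ha]; simp [lVar]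
  obtain ⟨y, hgy, hy2, hy0⟩ := exists_eq_mul_of_sq_eq_sq_mul (by simp [lVar, hg1])
    (by simp [ha0, sVar]) (by simp [quarticDisc, lVar])
    (sq_one_add_mul_mul_eq_sq_mul_quarticDisc ha hτ hinv hr hg2)
  have hy : y ∈ degreeBoundedSubring ℝ :=
    mem_degreeBoundedSubring_of_sq_mem hy0 (hy2 ▸ quarticDisc_mem_degreeBoundedSubring ha_mem)
  intro l
  rw [← mem_polynomialsDegreeLE, hb, hgy]
  exact coeff_C_X_add_mul_mem (pow_mem ha_mem 4) hy hy0 l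
end

section
/- Let φ ∈ ℝ⟦λ⟧ be the unique formal power series with constant coefficient 0 satisfying φ = λ·(1+φ)⁴. Then the identity λ·(256λ − 27)·φ′ = 12λφ³ + 52λφ² + 4λφ − 36λ + 9φ holds in ℝ⟦λ⟧, where φ′ denotes the formal derivative of φ with respect to λ. -/
/-!
Differentiating `φ = λ(1+φ)⁴` and multiplying by `1 + φ` turns `λ(1+φ)³·(1+φ)` back into `φ`,
which gives `(1 - 3φ)φ' = (1+φ)⁵`. Since `φ` has no constant term, `1 - 3φ` is a unit, and the
claimed identity, multiplied by `1 - 3φ`, is a polynomial consequence of these two relations.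
-/

namespace PowerSeries

variable {R : Type*} [CommRing R]

theorem one_sub_mul_derivative_of_eq_X_mul_one_add_pow {φ : R⟦X⟧} {n : ℕ}
    (hφ : φ = X * (1 + φ) ^ (n + 1)) :
    (1 - (n : R⟦X⟧) * φ) * d⁄dX R φ = (1 + φ) ^ (n + 2) := by
  have hd : d⁄dX R φ = (1 + φ) ^ (n + 1) + X * ((n + 1 : R⟦X⟧) * (1 + φ) ^ n * d⁄dX R φ) := by
    conv_lhs => rw [hφ]
    simp only [Derivation.leibniz, Derivation.leibniz_pow, derivative_X, map_add,
      Derivation.map_one_eq_zero, zero_add, Nat.add_sub_cancel, smul_eq_mul, nsmul_eq_mul]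
    push_cast
    ring
  linear_combination (1 + φ) * hd - ((n : R⟦X⟧) + 1) * d⁄dX R φ * hφ

theorem isUnit_one_sub_mul_of_constantCoeff_eq_zero {φ : R⟦X⟧} (hφ : constantCoeff φ = 0)
    (c : R⟦X⟧) : IsUnit (1 - c * φ) := by
  simp [isUnit_iff_constantCoeff, hφ]

end PowerSeries

open PowerSeries in
theorem tutte_root_derivative_identity_general (φ : PowerSeries ℝ)
    (hφ : φ = X * (1 + φ) ^ 4) :
    X * (256 * X - 27) * (d⁄dX ℝ φ) =
      12 * X * φ ^ 3 + 52 * X * φ ^ 2 + 4 * X * φ - 36 * X + 9 * φ := by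
  have key : (1 - 3 * φ) * d⁄dX ℝ φ = (1 + φ) ^ 5 := by
    exact_mod_cast one_sub_mul_derivative_of_eq_X_mul_one_add_pow (n := 3) hφ
  have hφ0 : constantCoeff φ = 0 := by
    rw [hφ]
    simp
  have hunit : IsUnit (1 - 3 * φ) := isUnit_one_sub_mul_of_constantCoeff_eq_zero hφ0 3
  apply hunit.mul_left_cancel
  linear_combination X * (256 * X - 27) * key - ((256 * X - 27) * (1 + φ) + 36) * hφ

open PowerSeries in
/-- Let `φ ∈ ℝ⟦λ⟧` be the unique formal power series with constant
coefficient `0` satisfying `φ = λ·(1+φ)⁴`.  Then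
`λ·(256λ − 27)·φ′ = 12λφ³ + 52λφ² + 4λφ − 36λ + 9φ` in `ℝ⟦λ⟧`. -/
theorem tutte_root_derivative_identity (φ : PowerSeries ℝ)
    (hφ0 : constantCoeff φ = 0)
    (hφ : φ = X * (1 + φ) ^ 4) :
    X * (256 * X - 27) * (d⁄dX ℝ φ) =
      12 * X * φ ^ 3 + 52 * X * φ ^ 2 + 4 * X * φ - 36 * X + 9 * φ :=
  tutte_root_derivative_identity_general φ hφ
end

section
/- Let φ ∈ ℝ⟦λ⟧ be the unique formal power series with constant coefficient 0 satisfying φ = λ·(1+φ)⁴, and let Φ denote its image in ℝ⟦s,λ⟧. Set G := [1 + λs + s + (1+λs)·Φ·(1 − Φ − Φ²)]² − 4s·(1+λs)², and let F ∈ ℝ⟦s,λ⟧ be the unique formal power series with constant coefficient 1 satisfying F² = G. Then there exist a nonzero polynomial B ∈ ℝ[s,λ] and a polynomial A ∈ ℝ[s,λ,z] of degree at most 3 in the variable z such that B(s,λ)·(∂F/∂λ) = A(s,λ,Φ)·F holds in ℝ⟦s,λ⟧, where A(s,λ,Φ) means the element of ℝ⟦s,λ⟧ obtained by substituting Φ for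 z in A, and ∂F/∂λ is the formal partial derivative of F with respect to λ. -/
/-!
Since `F² = G`, the logarithmic derivative `∂F/F` equals `∂G/(2G)`, and `∂G` only involves
`∂Φ`, which the functional equation gives as `(1 + Φ)⁵ / (1 - 3Φ)`. Everything is therefore a
rational function of `s`, `λ` and `Φ`. Reducing `∂G/(2G)` modulo `Φ = λ(1 + Φ)⁴` gives
explicit `A` and `B`; checking `B · ∂G = 2A · G` is a rational identity in `s` and `u = 1 + Φ`,
because the functional equation parametrizes `λ = (u - 1)/u⁴`.
-/

open PowerSeries

noncomputable def polyToSeries : Polynomial (Polynomial ℝ) →+* PowerSeries (PowerSeries ℝ) :=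
  (Polynomial.coeToPowerSeries.ringHom).comp
    (Polynomial.mapRingHom Polynomial.coeToPowerSeries.ringHom)

section Radicand

variable {R S : Type*} [CommRing R] [CommRing S]

def radicand (s l z : R) : R :=
  (1 + l * s + s + (1 + l * s) * z * (1 - z - z ^ 2)) ^ 2 - 4 * s * (1 + l * s) ^ 2

def radicandDeriv (s l z z' : R) : R :=
  2 * (1 + l * s + s + (1 + l * s) * z * (1 - z - z ^ 2)) *
      (s * (1 + z * (1 - z - z ^ 2)) + (1 + l * s) * (1 - 2 * z - 3 * z ^ 2) * z') -
    8 * s ^ 2 * (1 + l * s)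

/- `logDerivNum s l Φ / logDerivDen s l` is `(∂G/∂λ) / (2G)` written in the basis
`1, Φ, Φ², Φ³` of `ℝ(s,λ)(Φ)` over `ℝ(s,λ)`. -/
def logDerivDen (s l : R) : R :=
  -1 + 32 * l - 256 * l ^ 2 + s - 36 * s * l + 512 * s * l ^ 2 - 2048 * s * l ^ 3 -
    134 * s ^ 2 * l ^ 2 + 1888 * s ^ 2 * l ^ 3 - 7168 * s ^ 2 * l ^ 4 - 164 * s ^ 3 * l ^ 3 +
    3136 * s ^ 3 * l ^ 4 - 14336 * s ^ 3 * l ^ 5 - 65 * s ^ 4 * l ^ 4 + 2784 * s ^ 4 * l ^ 5 -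
    17920 * s ^ 4 * l ^ 6 + 1408 * s ^ 5 * l ^ 6 - 14336 * s ^ 5 * l ^ 7 + 416 * s ^ 6 * l ^ 7 -
    7168 * s ^ 6 * l ^ 8 + 64 * s ^ 7 * l ^ 8 - 2048 * s ^ 7 * l ^ 9 - 256 * s ^ 8 * l ^ 10

def logDerivNum (s l z : R) : R :=
  -1 + 11 * z + 5 * z ^ 2 + z ^ 3 + 16 * l - 176 * l * z - 80 * l * z ^ 2 - 16 * l * z ^ 3 - 3 * s -
    11 * s * z - 5 * s * z ^ 2 - s * z ^ 3 + 100 * s * l + 268 * s * l * z + 120 * s * l * z ^ 2 +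
    24 * s * l * z ^ 3 - 672 * s * l ^ 2 - 2144 * s * l ^ 2 * z - 1056 * s * l ^ 2 * z ^ 2 -
    224 * s * l ^ 2 * z ^ 3 - 4 * s ^ 2 * l - 24 * s ^ 2 * l * z - 4 * s ^ 2 * l * z ^ 2 +
    534 * s ^ 2 * l ^ 2 + 1030 * s ^ 2 * l ^ 2 * z + 386 * s ^ 2 * l ^ 2 * z ^ 2 +
    66 * s ^ 2 * l ^ 2 * z ^ 3 - 3920 * s ^ 2 * l ^ 3 - 7312 * s ^ 2 * l ^ 3 * z -
    3056 * s ^ 2 * l ^ 3 * z ^ 2 - 560 * s ^ 2 * l ^ 3 * z ^ 3 - 12 * s ^ 3 * l ^ 2 * z +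
    1024 * s ^ 3 * l ^ 3 + 1752 * s ^ 3 * l ^ 3 * z + 520 * s ^ 3 * l ^ 3 * z ^ 2 +
    64 * s ^ 3 * l ^ 3 * z ^ 3 - 9472 * s ^ 3 * l ^ 4 - 11328 * s ^ 3 * l ^ 4 * z -
    3008 * s ^ 3 * l ^ 4 * z ^ 2 - 256 * s ^ 3 * l ^ 4 * z ^ 3 + 851 * s ^ 4 * l ^ 4 +
    1527 * s ^ 4 * l ^ 4 * z + 337 * s ^ 4 * l ^ 4 * z ^ 2 + 21 * s ^ 4 * l ^ 4 * z ^ 3 -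
    12944 * s ^ 4 * l ^ 5 - 8912 * s ^ 4 * l ^ 5 * z + 208 * s ^ 4 * l ^ 5 * z ^ 2 +
    656 * s ^ 4 * l ^ 5 * z ^ 3 + 260 * s ^ 5 * l ^ 5 + 644 * s ^ 5 * l ^ 5 * z +
    88 * s ^ 5 * l ^ 5 * z ^ 2 - 11040 * s ^ 5 * l ^ 6 - 3424 * s ^ 5 * l ^ 6 * z +
    2272 * s ^ 5 * l ^ 6 * z ^ 2 + 928 * s ^ 5 * l ^ 6 * z ^ 3 + 96 * s ^ 6 * l ^ 6 * z -
    5936 * s ^ 6 * l ^ 7 - 496 * s ^ 6 * l ^ 7 * z + 1392 * s ^ 6 * l ^ 7 * z ^ 2 +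
    432 * s ^ 6 * l ^ 7 * z ^ 3 - 1856 * s ^ 7 * l ^ 8 + 256 * s ^ 7 * l ^ 8 * z ^ 2 +
    64 * s ^ 7 * l ^ 8 * z ^ 3 - 256 * s ^ 8 * l ^ 9

theorem map_radicand (f : R →+* S) (s l z : R) :
    f (radicand s l z) = radicand (f s) (f l) (f z) := by
  simp only [radicand, map_add, map_sub, map_mul, map_pow, map_one, map_ofNat]

theorem map_radicandDeriv (f : R →+* S) (s l z z' : R) :
    f (radicandDeriv s l z z') = radicandDeriv (f s) (f l) (f z) (f z') := by
  simp only [radicandDeriv, map_add, map_sub, map_mul, map_pow, map_one, map_ofNat]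

theorem map_logDerivDen (f : R →+* S) (s l : R) :
    f (logDerivDen s l) = logDerivDen (f s) (f l) := by
  simp only [logDerivDen, map_add, map_sub, map_mul, map_pow, map_neg, map_one, map_ofNat]

theorem map_logDerivNum (f : R →+* S) (s l z : R) :
    f (logDerivNum s l z) = logDerivNum (f s) (f l) (f z) := by
  simp only [logDerivNum, map_add, map_sub, map_mul, map_pow, map_neg, map_one, map_ofNat]

theorem logDerivDen_zero_zero : logDerivDen (0 : R) 0 = -1 := by
  simp [logDerivDen]

theorem natDegree_logDerivNum_C_C_X_le (a b : R) :
    (logDerivNum (Polynomial.C a) (Polynomial.C b) Polynomial.X).natDegree ≤ 3 := by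
  unfold logDerivNum
  compute_degree

theorem logDerivDen_mul_radicandDeriv_of_field {K : Type*} [Field K] {s l t p : K}
    (ht : t = l * (1 + t) ^ 4) (hp : (1 - 3 * t) * p = (1 + t) ^ 5) :
    logDerivDen s l * radicandDeriv s l t p = 2 * logDerivNum s l t * radicand s l t := by
  obtain ⟨u, rfl⟩ : ∃ u, t = u - 1 := ⟨t + 1, by ring⟩
  have hu : u ≠ 0 := by
    rintro rfl
    norm_num at ht
  have hu' : 4 - 3 * u ≠ 0 := by
    intro h
    refine hu (pow_eq_zero_iff (n := 5) (by norm_num) |>.mp ?_)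
    simpa [show 1 - 3 * (u - 1) = 4 - 3 * u by ring, h] using hp.symm
  obtain rfl : l = (u - 1) / u ^ 4 := by
    rw [eq_div_iff (pow_ne_zero 4 hu)]
    linear_combination -ht
  obtain rfl : p = u ^ 5 / (4 - 3 * u) := by
    rw [eq_div_iff hu']
    linear_combination hp
  simp only [logDerivDen, logDerivNum, radicand, radicandDeriv]
  have hu'' : 4 - u * 3 ≠ 0 := by rwa [mul_comm]
  field_simp
  ring

theorem logDerivDen_mul_radicandDeriv [IsDomain R] {s l t p : R}
    (ht : t = l * (1 + t) ^ 4) (hp : (1 - 3 * t) * p = (1 + t) ^ 5) :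
    logDerivDen s l * radicandDeriv s l t p = 2 * logDerivNum s l t * radicand s l t := by
  let f := algebraMap R (FractionRing R)
  apply IsFractionRing.injective R (FractionRing R)
  simp only [map_mul, map_ofNat, map_logDerivDen, map_logDerivNum, map_radicand,
    map_radicandDeriv]
  apply logDerivDen_mul_radicandDeriv_of_field
  · simpa only [map_mul, map_add, map_one, map_pow] using congrArg f ht
  · simpa only [map_mul, map_add, map_sub, map_one, map_pow, map_ofNat] using congrArg f hp

end Radicand

section Derivation

variable {A R : Type*} [CommSemiring A] [CommRing R] [Algebra A R] (D : Derivation A R R)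

theorem one_sub_three_mul_derivation_of_eq_mul_one_add_pow_four {l x : R} (hl : D l = 1)
    (hx : x = l * (1 + x) ^ 4) : (1 - 3 * x) * D x = (1 + x) ^ 5 := by
  have hDx : D x = (1 + x) ^ 4 + l * (4 * (1 + x) ^ 3 * D x) := by
    conv_lhs => rw [hx]
    simp only [Derivation.leibniz, Derivation.leibniz_pow, map_add, Derivation.map_one_eq_zero,
      hl, smul_eq_mul, nsmul_eq_mul, Nat.cast_ofNat]
    ring
  linear_combination (1 + x) * hDx - 4 * D x * hx

theorem derivation_radicand {s l : R} (hs : D s = 0) (hl : D l = 1) (z : R) :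
    D (radicand s l z) = radicandDeriv s l z (D z) := by
  have h4 : D (4 : R) = 0 := by exact_mod_cast D.map_natCast 4
  simp only [radicand, radicandDeriv, Derivation.leibniz, Derivation.leibniz_pow, map_add,
    map_sub, Derivation.map_one_eq_zero, hs, hl, h4, smul_eq_mul, nsmul_eq_mul]
  push_cast
  ring

theorem mul_derivation_eq_of_sq_eq [IsDomain R] {F G a b : R} (h2 : (2 : R) ≠ 0) (hF : F ≠ 0)
    (hFG : F ^ 2 = G) (h : b * D G = 2 * a * G) : b * D F = a * F := by
  have hDG : D G = 2 * F * D F := by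
    rw [← hFG, Derivation.leibniz_pow]
    simp only [smul_eq_mul, nsmul_eq_mul]
    ring
  refine mul_left_cancel₀ (mul_ne_zero h2 hF) ?_
  linear_combination h - b * hDG - 2 * a * hFG

theorem logDerivDen_mul_derivation_sqrt_radicand [IsDomain R] {s l Φ F : R} (hs : D s = 0)
    (hl : D l = 1) (hΦ : Φ = l * (1 + Φ) ^ 4) (h2 : (2 : R) ≠ 0) (hF : F ≠ 0)
    (hF2 : F ^ 2 = radicand s l Φ) :
    logDerivDen s l * D F = logDerivNum s l Φ * F := by
  refine mul_derivation_eq_of_sq_eq D h2 hF hF2 ?_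
  rw [derivation_radicand D hs hl]
  exact logDerivDen_mul_radicandDeriv hΦ
    (one_sub_three_mul_derivation_of_eq_mul_one_add_pow_four D hl hΦ)

end Derivation

theorem holonomic_first_derivative_general
    (φ : PowerSeries ℝ)
    (hφ : φ = PowerSeries.X * (1 + φ) ^ 4)
    (Φ F : PowerSeries (PowerSeries ℝ))
    (hΦ : Φ = PowerSeries.map (PowerSeries.C (R := ℝ)) φ)
    (hF1 : constantCoeff (R := ℝ) (constantCoeff (R := PowerSeries ℝ) F) = 1)
    (hF2 : F ^ 2 =
      (1 + lVar * sVar + sVar + (1 + lVar * sVar) * Φ * (1 - Φ - Φ ^ 2)) ^ 2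
        - 4 * sVar * (1 + lVar * sVar) ^ 2) :
    ∃ (B : Polynomial (Polynomial ℝ)) (A : Polynomial (Polynomial (Polynomial ℝ))),
      B ≠ 0 ∧ A.natDegree ≤ 3 ∧
      polyToSeries B * (d⁄dX (PowerSeries ℝ) F) =
        Polynomial.eval₂ polyToSeries Φ A * F := by
  refine ⟨logDerivDen (Polynomial.C Polynomial.X) Polynomial.X,
    logDerivNum (Polynomial.C (Polynomial.C Polynomial.X)) (Polynomial.C Polynomial.X)
      Polynomial.X, ?_, natDegree_logDerivNum_C_C_X_le _ _, ?_⟩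
  · intro h
    simpa [map_logDerivDen, logDerivDen_zero_zero] using congrArg
      ((Polynomial.evalRingHom 0).comp (Polynomial.evalRingHom 0)) h
  have hΦrel : Φ = lVar * (1 + Φ) ^ 4 := by
    rw [hΦ]
    nth_rewrite 1 [hφ]
    simp [lVar]
  have h2 : (2 : PowerSeries (PowerSeries ℝ)) ≠ 0 := by
    simpa only [map_ofNat] using
      (map_ne_zero (algebraMap ℝ (PowerSeries (PowerSeries ℝ)))).mpr (two_ne_zero (α := ℝ))
  have hF : F ≠ 0 := by
    rintro rfl
    simp at hF1
  have hs : polyToSeries (Polynomial.C Polynomial.X) = sVar := by simp [polyToSeries, sVar]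
  have hl : polyToSeries Polynomial.X = lVar := by simp [polyToSeries, lVar]
  have hA := map_logDerivNum (R := Polynomial (Polynomial (Polynomial ℝ)))
    (Polynomial.eval₂RingHom polyToSeries Φ)
    (Polynomial.C (Polynomial.C Polynomial.X)) (Polynomial.C Polynomial.X) Polynomial.X
  simp only [Polynomial.coe_eval₂RingHom, Polynomial.eval₂_C, Polynomial.eval₂_X] at hA
  rw [map_logDerivDen, hA, hs, hl]
  -- `d⁄dX` is a derivation for this algebra structure, not for the one instance search finds.
  let _ : Algebra (PowerSeries ℝ) (PowerSeries (PowerSeries ℝ)) := MvPowerSeries.instAlgebra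
  exact logDerivDen_mul_derivation_sqrt_radicand _ derivative_C derivative_X hΦrel h2 hF hF2

/-- Let `φ ∈ ℝ⟦λ⟧` satisfy `φ = λ(1+φ)⁴` with zero constant coefficient,
let `Φ` be its image in `ℝ⟦s,λ⟧`, let
`G = [1 + λs + s + (1+λs)·Φ·(1 − Φ − Φ²)]² − 4s(1+λs)²`, and let `F` be the unique square
root of `G` with constant coefficient `1`.  Then there are a nonzero polynomial
`B ∈ ℝ[s,λ]` and a polynomial `A ∈ ℝ[s,λ][z]` of degree at most `3` in `z` with
`B·(∂F/∂λ) = A(s,λ,Φ)·F`. -/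
theorem holonomic_first_derivative
    (φ : PowerSeries ℝ)
    (hφ0 : constantCoeff (R := ℝ) φ = 0)
    (hφ : φ = PowerSeries.X * (1 + φ) ^ 4)
    (Φ F : PowerSeries (PowerSeries ℝ))
    (hΦ : Φ = PowerSeries.map (PowerSeries.C (R := ℝ)) φ)
    (hF1 : constantCoeff (R := ℝ) (constantCoeff (R := PowerSeries ℝ) F) = 1)
    (hF2 : F ^ 2 =
      (1 + lVar * sVar + sVar + (1 + lVar * sVar) * Φ * (1 - Φ - Φ ^ 2)) ^ 2
        - 4 * sVar * (1 + lVar * sVar) ^ 2) :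
    ∃ (B : Polynomial (Polynomial ℝ)) (A : Polynomial (Polynomial (Polynomial ℝ))),
      B ≠ 0 ∧ A.natDegree ≤ 3 ∧
      polyToSeries B * (d⁄dX (PowerSeries ℝ) F) =
        Polynomial.eval₂ polyToSeries Φ A * F :=
  holonomic_first_derivative_general φ hφ Φ F hΦ hF1 hF2
end

section
/- Let φ ∈ ℝ⟦λ⟧ be the unique formal power series with constant coefficient 0 satisfying φ = λ·(1+φ)⁴. Then for every integer i ≥ 1, the coefficient of λⁱ in the power series φ·(1 − φ − φ²) equals 2·(4i+1)! / ((i+1)!·(3i+2)!). In other words, φ·(1 − φ − φ²) equals Tutte's series τ(λ) = Σ_{i=1}^∞ [2·(4i+1)! / ((i+1)!·(3i+2)!)]·λⁱ. -/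
/-!
Since `φ ^ (k + 1) = X * (1 + φ) ^ r * φ ^ k`, the binomial theorem expresses the coefficient of
`X ^ (i + 1)` in `φ ^ (k + 1)` through the coefficients of `X ^ i` in `φ ^ k, …, φ ^ (k + r)`.
A weighted Vandermonde identity shows that the Lagrange inversion values
`[X ^ i] φ ^ k = k / i * (r * i).choose (i - k)` satisfy the same recursion, so they are the
coefficients of the powers of `φ`. For `r = 4` the coefficient of `X ^ i` in
`φ * (1 - φ - φ ^ 2) = φ - φ ^ 2 - φ ^ 3` is then a combination of three binomial coefficients,
which simplifies to Tutte's number `2 * (4 * i + 1)! / ((i + 1)! * (3 * i + 2)!)`.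
-/

open Finset PowerSeries

theorem Nat.add_one_mul_choose_add_one (N j : ℕ) :
    (j + 1) * N.choose (j + 1) = N * (N - 1).choose j := by
  cases N with
  | zero => simp
  | succ N => rw [Nat.add_one_sub_one, Nat.add_one_mul_choose_eq, mul_comm]

theorem Nat.sum_range_mul_choose_mul_choose (r m d : ℕ) :
    ∑ j ∈ range (d + 2), j * r.choose j * m.choose (d + 1 - j) = r * (r + m - 1).choose d := by
  rcases r with _ | r
  · rw [zero_mul]
    refine Finset.sum_eq_zero fun j _ => ?_
    rcases j with _ | j <;> simp
  rw [sum_range_succ', show r + 1 + m - 1 = r + m by omega, Nat.add_choose_eq r m d,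
    Nat.sum_antidiagonal_eq_sum_range_succ_mk, mul_sum]
  simp only [zero_mul, add_zero, Nat.add_sub_add_right, Nat.add_one_mul_choose_add_one,
    Nat.add_one_sub_one, mul_assoc]

-- The recursion of `coeff_succ_pow_succ_of_eq_X_mul` for the values `k / i * (r * i).choose (i - k)`
-- at `i = l + d + 1`, `k = l + 1`, cleared of denominators.
theorem Nat.lagrange_recursion (r l d : ℕ) :
    (l + d + 1) * ∑ j ∈ range (d + 1), r.choose j * ((l + j) * (r * (l + d)).choose (d - j)) =
      (l + 1) * (l + d) * (r * (l + d + 1)).choose d := by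
  rcases d with _ | e
  · simp
  have hsplit :
      ∑ j ∈ range (e + 2), r.choose j * ((l + j) * (r * (l + e + 1)).choose (e + 1 - j)) =
        l * (r * (l + e + 2)).choose (e + 1) + r * (r * (l + e + 2) - 1).choose e := by
    rw [show r * (l + e + 2) = r + r * (l + e + 1) by ring, ← Nat.sum_range_mul_choose_mul_choose,
      Nat.add_choose_eq, Nat.sum_antidiagonal_eq_sum_range_succ_mk, mul_sum, ← sum_add_distrib]
    exact sum_congr rfl fun j _ => by ring
  have habs := Nat.add_one_mul_choose_add_one (r * (l + e + 2)) e
  rw [← add_assoc, hsplit]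
  linear_combination habs.symm

namespace PowerSeries

theorem coeff_pow_eq_zero_of_lt {R : Type*} [CommSemiring R] {φ : R⟦X⟧} (hφ : X ∣ φ) {i k : ℕ}
    (h : i < k) : coeff i (φ ^ k) = 0 :=
  X_pow_dvd_iff.mp (pow_dvd_pow_of_dvd hφ k) i h

theorem coeff_succ_pow_succ_of_eq_X_mul {R : Type*} [CommSemiring R] {φ : R⟦X⟧} {r : ℕ}
    (hφ : φ = X * (1 + φ) ^ r) (i l : ℕ) :
    coeff (i + 1) (φ ^ (l + 1)) = ∑ j ∈ range (r + 1), r.choose j * coeff i (φ ^ (l + j)) := by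
  have hexpand : φ ^ (l + 1) = X * ∑ j ∈ range (r + 1), C (r.choose j : R) * φ ^ (l + j) :=
    calc φ ^ (l + 1) = X * ((φ + 1) ^ r * φ ^ l) := by
          rw [pow_succ', add_comm, ← mul_assoc, ← hφ]
      _ = _ := by
        rw [add_pow, sum_mul]
        exact congrArg _ (sum_congr rfl fun j _ => by rw [map_natCast, pow_add]; ring)
  simp only [hexpand, coeff_succ_X_mul, map_sum, coeff_C_mul]

theorem coeff_pow_of_eq_X_mul_one_add_pow {K : Type*} [Field K] [CharZero K] {φ : K⟦X⟧} {r : ℕ}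
    (hφ : φ = X * (1 + φ) ^ r) {i k : ℕ} (hi : 1 ≤ i) (hk : k ≤ i) :
    coeff i (φ ^ k) = k * (r * i).choose (i - k) / i := by
  have hX : X ∣ φ := ⟨_, hφ⟩
  induction i, hi using Nat.le_induction generalizing k with
  | base =>
    interval_cases k
    · simp
    · rw [pow_one, hφ, ← zero_add 1, coeff_succ_X_mul, coeff_zero_eq_constantCoeff, map_pow,
        map_add, X_dvd_iff.mp hX]
      simp
  | succ i hi ih =>
    rcases k with _ | l
    · simp
    obtain ⟨d, rfl⟩ : ∃ d, i = l + d := ⟨i - l, by omega⟩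
    have hvanish : ∀ j ≥ d + 1, (r.choose j : K) * coeff (l + d) (φ ^ (l + j)) = 0 :=
      fun j hj => by rw [coeff_pow_eq_zero_of_lt hX (by omega), mul_zero]
    have hchoose : ∀ j ≥ r + 1, (r.choose j : K) * coeff (l + d) (φ ^ (l + j)) = 0 :=
      fun j hj => by rw [Nat.choose_eq_zero_of_lt (by omega), Nat.cast_zero, zero_mul]
    rw [coeff_succ_pow_succ_of_eq_X_mul hφ,
      ← eventually_constant_sum hchoose (Nat.le_add_right _ (d + 1)),
      eventually_constant_sum hvanish (Nat.le_add_left _ _),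
      sum_congr rfl fun j hj => by rw [ih (by simp at hj; omega)]]
    have key := congrArg (Nat.cast : ℕ → K) (Nat.lagrange_recursion r l d)
    push_cast at key
    have hne : (l + d : K) ≠ 0 := by norm_cast; omega
    simp only [Nat.add_sub_add_left, ← mul_div_assoc, ← sum_div]
    rw [show l + d + 1 - (l + 1) = d by omega]
    push_cast
    rw [div_eq_div_iff hne (by exact_mod_cast (l + d).succ_ne_zero)]
    linear_combination key

end PowerSeries

open Nat in
theorem choose_combination_eq_tutte_coeff {i : ℕ} (hi : 3 ≤ i) :
    ((4 * i).choose (i - 1) : ℝ) / i - 2 * (4 * i).choose (i - 2) / i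
        - 3 * (4 * i).choose (i - 3) / i = 2 * (4 * i + 1)! / ((i + 1)! * (3 * i + 2)!) := by
  obtain ⟨m, rfl⟩ : ∃ m, i = m + 3 := ⟨i - 3, by omega⟩
  rw [Nat.cast_choose ℝ (by omega), Nat.cast_choose ℝ (by omega), Nat.cast_choose ℝ (by omega),
    show 4 * (m + 3) - (m + 3 - 1) = 3 * m + 10 by omega,
    show 4 * (m + 3) - (m + 3 - 2) = 3 * m + 10 + 1 by omega,
    show 4 * (m + 3) - (m + 3 - 3) = 3 * m + 10 + 1 + 1 by omega,
    show m + 3 - 1 = m + 2 by omega, show m + 3 - 2 = m + 1 by omega, Nat.add_sub_cancel,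
    show 4 * (m + 3) = 4 * m + 12 by ring, show 3 * (m + 3) + 2 = 3 * m + 10 + 1 by ring,
    Nat.factorial_succ (4 * m + 12), Nat.factorial_succ (3 * m + 10 + 1),
    Nat.factorial_succ (3 * m + 10)]
  have ha := (4 * m + 12).factorial_pos
  have hb := (3 * m + 10).factorial_pos
  -- keep the two large factorials opaque, so that only the small ones get unfolded below
  generalize (4 * m + 12)! = a at ha ⊢
  generalize (3 * m + 10)! = b at hb ⊢
  push_cast [Nat.factorial_succ]
  field_simp
  ring

open PowerSeries in
theorem tutte_root_gives_tutte_series_general (φ : PowerSeries ℝ)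
    (hφ : φ = X * (1 + φ) ^ 4) :
    ∀ i : ℕ, 1 ≤ i →
      coeff i (φ * (1 - φ - φ ^ 2)) =
        2 * (Nat.factorial (4 * i + 1) : ℝ) /
          ((Nat.factorial (i + 1) : ℝ) * (Nat.factorial (3 * i + 2) : ℝ)) := by
  intro i hi
  have hX : X ∣ φ := ⟨_, hφ⟩
  have hcoeff {k : ℕ} (hk : k ≤ i) := coeff_pow_of_eq_X_mul_one_add_pow hφ hi hk
  rw [show φ * (1 - φ - φ ^ 2) = φ ^ 1 - φ ^ 2 - φ ^ 3 by ring, map_sub, map_sub]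
  obtain rfl | rfl | hi3 : i = 1 ∨ i = 2 ∨ 3 ≤ i := by omega
  · rw [hcoeff le_rfl, coeff_pow_eq_zero_of_lt hX (by norm_num),
      coeff_pow_eq_zero_of_lt hX (by norm_num)]
    norm_num [Nat.factorial]
  · rw [hcoeff (by norm_num), hcoeff le_rfl, coeff_pow_eq_zero_of_lt hX (by norm_num)]
    norm_num [Nat.factorial]
  · rw [hcoeff (by omega), hcoeff (by omega), hcoeff (by omega)]
    push_cast
    simpa only [one_mul] using choose_combination_eq_tutte_coeff hi3

open PowerSeries in
/-- Let `φ ∈ ℝ⟦λ⟧` be the unique formal power series with constant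
coefficient `0` satisfying `φ = λ·(1+φ)⁴`.  Then for every `i ≥ 1`, the coefficient of `λⁱ`
in `φ·(1 − φ − φ²)` equals `2·(4i+1)! / ((i+1)!·(3i+2)!)`; i.e. `φ·(1 − φ − φ²)` is
Tutte's series `τ`. -/
theorem tutte_root_gives_tutte_series (φ : PowerSeries ℝ)
    (hφ0 : constantCoeff φ = 0)
    (hφ : φ = X * (1 + φ) ^ 4) :
    ∀ i : ℕ, 1 ≤ i →
      coeff i (φ * (1 - φ - φ ^ 2)) =
        2 * (Nat.factorial (4 * i + 1) : ℝ) /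
          ((Nat.factorial (i + 1) : ℝ) * (Nat.factorial (3 * i + 2) : ℝ)) :=
  tutte_root_gives_tutte_series_general φ hφ
end
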